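/- arXiv:2212.03113 — 9 statements merged into one kernel-verified Lean document; each statement's English description precedes it below -/
import Mathlib

section
/- Let W : ℤ → ℝ, E ∈ ℝ, and let N₁ ≤ N₂ be integers with N = N₂ − N₁ + 1 and det(H_{[N₁,N₂]} − E·I) ≠ 0. Then for all integers n₁, n₂ with N₁ ≤ n₁ ≤ n₂ ≤ N₂, |G_{[N₁,N₂]}(E)(n₁,n₂)| = |P_{n₁−N₁}^W(E, N₁) · P_{N₂−n₂}^W(E, n₂+1)| / |P_N^W(E, N₁)|. -/
noncomputable section

/-- The restriction `H_{[N₁,N₂]}` of the discrete Schrödinger operator with potential `W`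
to the box `[N₁,N₂]` with Dirichlet boundary conditions: the tridiagonal matrix with
diagonal `W(N₁), …, W(N₂)` and `1` on the sub- and super-diagonals. -/
def boxH (W : ℤ → ℝ) (N₁ N₂ : ℤ) :
    Matrix (Fin (N₂ - N₁ + 1).toNat) (Fin (N₂ - N₁ + 1).toNat) ℝ :=
  fun i j =>
    if i = j then W (N₁ + (i : ℕ))
    else if ((i : ℕ) : ℤ) = ((j : ℕ) : ℤ) + 1 ∨ ((j : ℕ) : ℤ) = ((i : ℕ) : ℤ) + 1 then 1
    else 0

/-- The Green's function of the box restriction: the matrix inverse of `H_{[N₁,N₂]} − E·I`. -/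
def boxGreen (W : ℤ → ℝ) (N₁ N₂ : ℤ) (E : ℝ) :
    Matrix (Fin (N₂ - N₁ + 1).toNat) (Fin (N₂ - N₁ + 1).toNat) ℝ :=
  (boxH W N₁ N₂ - E • (1 : Matrix (Fin (N₂ - N₁ + 1).toNat) (Fin (N₂ - N₁ + 1).toNat) ℝ))⁻¹

/-- The `k × k` tridiagonal matrix `D_k^W(n)` with diagonal `W(n), …, W(n+k-1)` and
`1` on the sub- and super-diagonals. -/
def jacBox (W : ℤ → ℝ) (k : ℕ) (n : ℤ) : Matrix (Fin k) (Fin k) ℝ :=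
  fun i j =>
    if i = j then W (n + (i : ℕ))
    else if ((i : ℕ) : ℤ) = ((j : ℕ) : ℤ) + 1 ∨ ((j : ℕ) : ℤ) = ((i : ℕ) : ℤ) + 1 then 1
    else 0

/-- `P_k^W(E,n) = det(E·I_k − D_k^W(n))` for `k ≥ 0`, with the convention `P_k = 0` for
`k < 0` (and `P_0 = 1`, the determinant of the empty matrix). -/
def Pdet (W : ℤ → ℝ) (E : ℝ) (k : ℤ) (n : ℤ) : ℝ :=
  if 0 ≤ k then
    Matrix.det (E • (1 : Matrix (Fin k.toNat) (Fin k.toNat) ℝ) - jacBox W k.toNat n)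
  else 0

/-! By Cramer's rule, `G(n₁, n₂)` is, up to sign, the minor of `H − E` with row `n₂` and
column `n₁` deleted, divided by `det (H − E) = ± P_N`. For `n₁ ≤ n₂` that minor is block lower
triangular: the tridiagonal block on `[N₁, n₁)`, a block on `[n₁, n₂)` which is lower triangular
with the superdiagonal ones of `H` on its diagonal, and the tridiagonal block on `(n₂, N₂]`.
Its determinant is therefore `± P_{n₁−N₁}(E, N₁) · P_{N₂−n₂}(E, n₂+1)`. -/

open Matrix

def Nat.succAbove (p i : ℕ) : ℕ := if i < p then i else i + 1

theorem Fin.val_succAbove {n : ℕ} (p : Fin (n + 1)) (i : Fin n) :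
    (p.succAbove i : ℕ) = Nat.succAbove p i := by
  simp only [Fin.succAbove, Fin.lt_def, Fin.val_castSucc, Nat.succAbove]
  split_ifs <;> rfl

section Tridiagonal

variable {R : Type*} [CommRing R]

def tridiagEntry (d : ℕ → R) (p q : ℕ) : R :=
  if p = q then d p else if p = q + 1 ∨ q = p + 1 then 1 else 0

def tridiag (d : ℕ → R) (k : ℕ) : Matrix (Fin k) (Fin k) R :=
  of fun i j => tridiagEntry d i j

theorem tridiagEntry_eq_zero (d : ℕ → R) {p q : ℕ} (h : q + 2 ≤ p ∨ p + 2 ≤ q) :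
    tridiagEntry d p q = 0 := by
  rw [tridiagEntry, if_neg (by omega), if_neg (by omega)]

theorem tridiagEntry_self_succ (d : ℕ → R) (p : ℕ) : tridiagEntry d p (p + 1) = 1 := by
  simp [tridiagEntry]

theorem tridiagEntry_add_add (d : ℕ → R) (t p q : ℕ) :
    tridiagEntry d (t + p) (t + q) = tridiagEntry (fun m => d (t + m)) p q := by
  simp only [tridiagEntry, Nat.add_left_cancel_iff, add_assoc]

theorem det_of_fin_add_of_upperRight_eq_zero (f : ℕ → ℕ → R) (p q : ℕ)
    (h : ∀ i j, i < p → p ≤ j → f i j = 0) :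
    (of fun i j : Fin (p + q) => f i j).det =
      (of fun i j : Fin p => f i j).det * (of fun i j : Fin q => f (p + i) (p + j)).det := by
  rw [← det_submatrix_equiv_self finSumFinEquiv]
  have hblocks : (of fun i j : Fin (p + q) => f i j).submatrix finSumFinEquiv finSumFinEquiv =
      fromBlocks (of fun i j : Fin p => f i j) 0 (of fun (i : Fin q) (j : Fin p) => f (p + i) j)
        (of fun i j : Fin q => f (p + i) (p + j)) := by
    ext (i | i) (j | j) <;> simp [h]
  rw [hblocks, det_fromBlocks_zero₁₂]

theorem det_of_tridiagEntry_superdiagonal (d : ℕ → R) (t r : ℕ) :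
    (of fun i j : Fin r => tridiagEntry d (t + i) (t + j + 1)).det = 1 := by
  rw [det_of_isLowerTriangular]
  · exact Finset.prod_eq_one fun i _ => tridiagEntry_self_succ d _
  · intro i j hij
    have : (i : ℕ) < j := hij
    exact tridiagEntry_eq_zero d (Or.inr (by omega))

theorem det_of_tridiagEntry_succAbove (d : ℕ → R) {a b n : ℕ} (hab : a ≤ b) (hbn : b ≤ n) :
    (of fun i j : Fin n => tridiagEntry d (Nat.succAbove b i) (Nat.succAbove a j)).det =
      (tridiag d a).det * (tridiag (fun m => d (b + 1 + m)) (n - b)).det := by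
  obtain ⟨r, rfl⟩ := Nat.exists_eq_add_of_le hab
  obtain ⟨s, rfl⟩ : ∃ s, n = a + (r + s) := ⟨n - (a + r), by omega⟩
  have hzero : ∀ i j, i < a + r → a ≤ j → i < j →
      tridiagEntry d (Nat.succAbove (a + r) i) (Nat.succAbove a j) = 0 := fun i j hi hj hij =>
    tridiagEntry_eq_zero d (Or.inr (by simp only [Nat.succAbove]; split_ifs <;> omega))
  rw [det_of_fin_add_of_upperRight_eq_zero
    (fun i j => tridiagEntry d (Nat.succAbove (a + r) i) (Nat.succAbove a j)) a (r + s)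
    fun i j hi hj => hzero i j (by omega) hj (by omega)]
  congr 1
  · congr 1
    ext i j
    simp [tridiag, Nat.succAbove, show (i : ℕ) < a + r by omega]
  rw [det_of_fin_add_of_upperRight_eq_zero
    (fun i j => tridiagEntry d (Nat.succAbove (a + r) (a + i)) (Nat.succAbove a (a + j))) r s
    fun i j hi hj => hzero _ _ (by omega) (by omega) (by omega)]
  have hmiddle : (of fun i j : Fin r =>
      tridiagEntry d (Nat.succAbove (a + r) (a + i)) (Nat.succAbove a (a + j))) =
      of fun i j : Fin r => tridiagEntry d (a + i) (a + j + 1) := by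
    ext i j
    simp [Nat.succAbove, add_assoc]
  have hlast : (of fun i j : Fin s =>
      tridiagEntry d (Nat.succAbove (a + r) (a + (r + i))) (Nat.succAbove a (a + (r + j)))) =
      tridiag (fun m => d (a + r + 1 + m)) s := by
    ext i j
    simp only [of_apply, tridiag, Nat.succAbove, if_neg (by omega : ¬a + (r + (i : ℕ)) < a + r),
      if_neg (by omega : ¬a + (r + (j : ℕ)) < a), ← tridiagEntry_add_add]
    ring_nf
  rw [hmiddle, hlast, det_of_tridiagEntry_superdiagonal, one_mul,
    show a + (r + s) - (a + r) = s by omega]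

theorem det_tridiag_submatrix_succAbove (d : ℕ → R) {n : ℕ} (a b : Fin (n + 1)) (hab : a ≤ b) :
    ((tridiag d (n + 1)).submatrix b.succAbove a.succAbove).det =
      (tridiag d a).det * (tridiag (fun m => d (b + 1 + m)) (n - b)).det := by
  rw [← det_of_tridiagEntry_succAbove d hab (Nat.lt_succ_iff.mp b.isLt)]
  congr 1
  ext i j
  simp only [tridiag, submatrix_apply, of_apply, Fin.val_succAbove]

end Tridiagonal

theorem tridiag_inv_apply {K : Type*} [Field K] (d : ℕ → K) {k : ℕ} (i j : Fin k) (hij : i ≤ j) :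
    (tridiag d k)⁻¹ i j = (-1) ^ (j + i : ℕ) * (tridiag d i).det *
      (tridiag (fun m => d (j + 1 + m)) (k - 1 - j)).det / (tridiag d k).det := by
  obtain _ | n := k
  · exact i.elim0
  rw [inv_def, Matrix.smul_apply, adjugate_fin_succ_eq_det_submatrix,
    det_tridiag_submatrix_succAbove d i j hij, Ring.inverse_eq_inv, smul_eq_mul,
    Nat.add_sub_cancel]
  ring

theorem boxH_sub_smul_one (W : ℤ → ℝ) (N₁ N₂ : ℤ) (E : ℝ) :
    boxH W N₁ N₂ - E • 1 = tridiag (fun m => W (N₁ + m) - E) (N₂ - N₁ + 1).toNat := by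
  ext i j
  simp only [boxH, tridiag, tridiagEntry, Matrix.sub_apply, Matrix.smul_apply, one_apply,
    of_apply, smul_eq_mul, Fin.ext_iff]
  split_ifs <;> first | (exfalso; omega) | ring

theorem smul_one_sub_jacBox (W : ℤ → ℝ) (E : ℝ) (k : ℕ) (n : ℤ) :
    E • 1 - jacBox W k n = -tridiag (fun m => W (n + m) - E) k := by
  ext i j
  simp only [jacBox, tridiag, tridiagEntry, Matrix.sub_apply, Matrix.smul_apply, one_apply,
    of_apply, Matrix.neg_apply, smul_eq_mul, Fin.ext_iff]
  split_ifs <;> first | (exfalso; omega) | ring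

theorem abs_Pdet (W : ℤ → ℝ) (E : ℝ) {k : ℤ} (n : ℤ) (hk : 0 ≤ k) :
    |Pdet W E k n| = |(tridiag (fun m => W (n + m) - E) k.toNat).det| := by
  rw [Pdet, if_pos hk, smul_one_sub_jacBox, det_neg, abs_mul, abs_pow, abs_neg, abs_one, one_pow,
    one_mul]

theorem stmt8 (W : ℤ → ℝ) (E : ℝ) (N₁ N₂ : ℤ)
    (n₁ n₂ : ℤ) (h1 : N₁ ≤ n₁) (h12 : n₁ ≤ n₂) (h2 : n₂ ≤ N₂) :
    |boxGreen W N₁ N₂ E ⟨(n₁ - N₁).toNat, by omega⟩ ⟨(n₂ - N₁).toNat, by omega⟩| =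
      |Pdet W E (n₁ - N₁) N₁ * Pdet W E (N₂ - n₂) (n₂ + 1)| /
        |Pdet W E (N₂ - N₁ + 1) N₁| := by
  rw [boxGreen, boxH_sub_smul_one, tridiag_inv_apply _ _ _ (Fin.mk_le_mk.mpr (by omega)),
    abs_mul, abs_Pdet _ _ _ (by omega), abs_Pdet _ _ _ (by omega), abs_Pdet _ _ _ (by omega)]
  have hsize : (N₂ - N₁ + 1).toNat - 1 - (n₂ - N₁).toNat = (N₂ - n₂).toNat := by omega
  have hdiag : (fun m : ℕ => W (N₁ + ((n₂ - N₁).toNat + 1 + m : ℕ)) - E) =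
      fun m : ℕ => W (n₂ + 1 + m) - E := by
    funext m
    congr 2
    omega
  rw [hsize, hdiag]
  simp only [abs_div, abs_mul, abs_pow, abs_neg, abs_one, one_pow, one_mul]
end
end

section
/- Let V, g : ℤ → ℝ and E ∈ ℝ. Suppose there is C' > 0 such that the unperturbed transfer matrices satisfy ‖M_k(n)‖ ≤ C'·k for every n ∈ ℤ and every k ≥ 1 (at most linear growth, as holds for every energy in the spectrum in the almost reducible regime), and suppose Σ_{n∈ℤ} (1+|n|)·|g(n)| < ∞. Then there is a constant C'' > 0, depending only on C' and Σ_{n∈ℤ}(1+|n|)|g(n)|, such that the perturbed transfer matrices satisfy ‖M̃_k(0)‖ ≤ C''·k for every k ≥ 1. -/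
attribute [local instance] Matrix.normedAddCommGroup

noncomputable section

/-- The `k`-step transfer matrix of the potential `W` at energy `E`, starting at site `n`:
`M_k(n) = S(n+k-1) ⋯ S(n)` where `S(j) = [[E - W j, -1], [1, 0]]`, and `M_0(n) = I`. -/
def tm (W : ℤ → ℝ) (E : ℝ) : ℕ → ℤ → Matrix (Fin 2) (Fin 2) ℝ
  | 0, _ => 1
  | k + 1, n => tm W E k (n + 1) * !![E - W n, -1; 1, 0]

/-!
Duhamel's formula writes `M̃_k(0)` as `M_k(0)` plus a sum over `j < k` of
`M_{k-1-j}(j+1) · [[-g j, 0], [0, 0]] · M̃_j(0)`. With `‖M_m‖ ≤ D (m + 1)`, `D = max C' 1`,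
this gives for `u_k = ‖M̃_k(0)‖` the inequality `u_k ≤ D (k + 1) + ∑_{j<k} 4 D (k - j) |g j| u_j`
(the entrywise sup norm is submultiplicative only up to the factor `2`, the dimension).
Since `(k - j)(j + 1) ≤ (k + 1)(j + 1)`, induction yields
`u_k ≤ D (k + 1) ∏_{j<k} (1 + 4 D (j + 1) |g j|) ≤ D (k + 1) exp (4 D ∑ (1 + |n|) |g n|)`.
-/

open Finset

namespace Matrix

variable {l m n α : Type*} [Fintype l] [Fintype m] [Fintype n] [NormedRing α]

theorem norm_mul_le_card_mul (A : Matrix l m α) (B : Matrix m n α) :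
    ‖A * B‖ ≤ Fintype.card m * ‖A‖ * ‖B‖ := by
  rw [norm_le_iff (by positivity)]
  intro i j
  calc ‖(A * B) i j‖ ≤ ∑ k, ‖A i k * B k j‖ := norm_sum_le _ _
    _ ≤ ∑ _k : m, ‖A‖ * ‖B‖ := sum_le_sum fun k _ => (norm_mul_le _ _).trans <|
        mul_le_mul (norm_entry_le_entrywise_sup_norm A) (norm_entry_le_entrywise_sup_norm B)
          (norm_nonneg _) (norm_nonneg _)
    _ = Fintype.card m * ‖A‖ * ‖B‖ := by rw [sum_const, card_univ, nsmul_eq_mul, mul_assoc]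

end Matrix

theorem norm_fin_two_single_zero_zero_le (x : ℝ) : ‖!![x, 0; 0, 0]‖ ≤ |x| := by
  rw [Matrix.norm_le_iff (abs_nonneg x)]
  intro i j
  fin_cases i <;> fin_cases j <;> simp

theorem sum_range_natCast_le_tsum {f : ℤ → ℝ} (hf : Summable f) (h0 : ∀ n, 0 ≤ f n) (k : ℕ) :
    ∑ j ∈ range k, f j ≤ ∑' n, f n := by
  simpa using hf.sum_le_tsum ((range k).map Nat.castEmbedding) fun n _ => h0 n

/-- Discrete Gronwall inequality for a kernel growing linearly in `k`; the product telescopes as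
`∏_{j<k} (1 + x_j) - 1 = ∑_{j<k} x_j ∏_{i<j} (1 + x_i)`. -/
theorem le_mul_prod_of_le_add_sum {u b : ℕ → ℝ} {A : ℝ} (hA : 0 ≤ A) (hb : ∀ j, 0 ≤ b j)
    (hu : ∀ k, u k ≤ A * (k + 1) + ∑ j ∈ range k, (k - j) * b j * u j) (k : ℕ) :
    u k ≤ A * (k + 1) * ∏ j ∈ range k, (1 + (j + 1) * b j) := by
  set P : ℕ → ℝ := fun k => ∏ j ∈ range k, (1 + (j + 1) * b j)
  have hP : ∀ j, 1 ≤ P j := fun j =>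
    one_le_prod fun i _ => le_add_of_nonneg_right (mul_nonneg (by positivity) (hb i))
  have hP_telescope : ∀ k, ∑ j ∈ range k, (j + 1) * b j * P j = P k - 1 := fun k => by
    rw [← prod_range_zero (fun j => 1 + ((j : ℝ) + 1) * b j), ← sum_range_sub P]
    refine sum_congr rfl fun j _ => ?_
    simp only [P, prod_range_succ]
    ring1
  induction k using Nat.strong_induction_on with
  | _ k ih =>
    have hterm : ∀ j ∈ range k,
        (k - j) * b j * u j ≤ A * (k + 1) * ((j + 1) * b j * P j) := fun j hj => by
      have hjk : (j : ℝ) < k := by exact_mod_cast mem_range.mp hj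
      have hbj := hb j
      have hPj := hP j
      calc (k - j) * b j * u j ≤ (k - j) * b j * (A * (j + 1) * P j) :=
            mul_le_mul_of_nonneg_left (ih j (mem_range.mp hj)) (mul_nonneg (by linarith) hbj)
        _ = (k - j) * (A * ((j + 1) * b j * P j)) := by ring
        _ ≤ (k + 1) * (A * ((j + 1) * b j * P j)) := by gcongr; linarith
        _ = A * (k + 1) * ((j + 1) * b j * P j) := by ring
    calc u k ≤ A * (k + 1) + ∑ j ∈ range k, (k - j) * b j * u j := hu k
      _ ≤ A * (k + 1) + ∑ j ∈ range k, A * (k + 1) * ((j + 1) * b j * P j) :=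
        add_le_add_right (sum_le_sum hterm) _
      _ = A * (k + 1) * P k := by rw [← mul_sum, hP_telescope]; ring1

theorem tm_succ' (W : ℤ → ℝ) (E : ℝ) (k : ℕ) (n : ℤ) :
    tm W E (k + 1) n = !![E - W (n + k), -1; 1, 0] * tm W E k n := by
  induction k generalizing n with
  | zero => simp [tm]
  | succ k ih =>
    rw [tm, ih, tm, mul_assoc, Nat.cast_succ, add_right_comm, add_assoc]

/-- Duhamel's formula; `!![-g m, 0; 0, 0]` is the defect `S_{V+g}(m) - S_V(m)`. -/
theorem tm_add_eq_add_sum (V g : ℤ → ℝ) (E : ℝ) (k : ℕ) (n : ℤ) :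
    tm (fun j => V j + g j) E k n = tm V E k n + ∑ j ∈ range k,
      tm V E (k - 1 - j) (n + j + 1) * !![-g (n + j), 0; 0, 0] * tm (fun j => V j + g j) E j n := by
  induction k with
  | zero => simp [tm]
  | succ k ih =>
    have hstep : !![E - (V (n + k) + g (n + k)), -1; 1, 0]
        = !![E - V (n + k), -1; 1, 0] + !![-g (n + k), 0; 0, 0] := by
      ext i j
      fin_cases i <;> fin_cases j <;> simp; linarith
    have hterm : ∀ j ∈ range k,
        tm V E (k - j) (n + j + 1) * !![-g (n + j), 0; 0, 0] * tm (fun j => V j + g j) E j n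
        = !![E - V (n + k), -1; 1, 0] *
          (tm V E (k - 1 - j) (n + j + 1) * !![-g (n + j), 0; 0, 0] *
            tm (fun j => V j + g j) E j n) := fun j hj => by
      obtain ⟨i, rfl⟩ := Nat.exists_eq_add_of_lt (mem_range.mp hj)
      rw [show j + i + 1 - j = i + 1 by omega, show j + i + 1 - 1 - j = i by omega, tm_succ',
        show n + j + 1 + i = n + (j + i + 1 : ℕ) by push_cast; ring]
      simp only [mul_assoc]
    rw [tm_succ', hstep, add_mul, tm_succ' V, sum_range_succ, Nat.add_sub_cancel, Nat.sub_self,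
      sum_congr rfl hterm, ← mul_sum, tm, one_mul, ← add_assoc, ← mul_add, ← ih]

theorem norm_tm_add_le (V g : ℤ → ℝ) (E A : ℝ) (hV : ∀ m x, ‖tm V E m x‖ ≤ A * (m + 1))
    (k : ℕ) (n : ℤ) :
    ‖tm (fun j => V j + g j) E k n‖ ≤ A * (k + 1) + ∑ j ∈ range k,
      (k - j) * (4 * A * |g (n + j)|) * ‖tm (fun j => V j + g j) E j n‖ := by
  have hmul (X Y : Matrix (Fin 2) (Fin 2) ℝ) : ‖X * Y‖ ≤ 2 * ‖X‖ * ‖Y‖ := by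
    simpa using Matrix.norm_mul_le_card_mul X Y
  rw [tm_add_eq_add_sum]
  refine (norm_add_le _ _).trans (add_le_add (hV k n) ((norm_sum_le _ _).trans
    (sum_le_sum fun j hj => ?_)))
  have hlen : ((k - 1 - j : ℕ) : ℝ) + 1 = k - j := by
    have := mem_range.mp hj
    rw [Nat.cast_sub (by omega), Nat.cast_sub (by omega)]
    push_cast; ring
  have hM := hV (k - 1 - j) (n + j + 1)
  rw [hlen] at hM
  have hP := norm_fin_two_single_zero_zero_le (-g (n + j))
  rw [abs_neg] at hP
  calc _ ≤ 2 * (2 * ‖tm V E (k - 1 - j) (n + j + 1)‖ * ‖!![-g (n + j), 0; 0, 0]‖) *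
          ‖tm (fun j => V j + g j) E j n‖ := by
        refine (hmul _ _).trans ?_
        gcongr
        exact hmul _ _
    _ ≤ 2 * (2 * (A * (k - j)) * |g (n + j)|) * ‖tm (fun j => V j + g j) E j n‖ := by
        gcongr
        exact mul_nonneg zero_le_two ((norm_nonneg _).trans hM)
    _ = _ := by ring

theorem norm_tm_le_max_mul_succ {V : ℤ → ℝ} {E C' : ℝ}
    (hM : ∀ n : ℤ, ∀ k : ℕ, 1 ≤ k → ‖tm V E k n‖ ≤ C' * k) (m : ℕ) (x : ℤ) :
    ‖tm V E m x‖ ≤ max C' 1 * (m + 1) := by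
  rcases m with _ | m
  · simp [tm]
  · calc ‖tm V E (m + 1) x‖ ≤ C' * (m + 1 : ℕ) := hM x _ (by omega)
      _ ≤ max C' 1 * ((m + 1 : ℕ) + 1) :=
        mul_le_mul (le_max_left _ _) (by linarith) (by positivity) (by positivity)

theorem norm_tm_add_le_mul_exp (V g : ℤ → ℝ) (E A : ℝ) (hA : 0 ≤ A)
    (hV : ∀ m x, ‖tm V E m x‖ ≤ A * (m + 1))
    (hg : Summable fun n : ℤ => (1 + |(n : ℝ)|) * |g n|) (k : ℕ) :
    ‖tm (fun j => V j + g j) E k 0‖ ≤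
      A * (k + 1) * Real.exp (4 * A * ∑' n : ℤ, (1 + |(n : ℝ)|) * |g n|) := by
  have hsum : ∑ j ∈ range k, ((j : ℝ) + 1) * (4 * A * |g j|) ≤
      4 * A * ∑' n : ℤ, (1 + |(n : ℝ)|) * |g n| := by
    calc ∑ j ∈ range k, ((j : ℝ) + 1) * (4 * A * |g j|)
        = 4 * A * ∑ j ∈ range k, (1 + |((j : ℤ) : ℝ)|) * |g j| := by
          rw [mul_sum]
          refine sum_congr rfl fun j _ => ?_
          rw [Int.cast_natCast, Nat.abs_cast]
          ring
      _ ≤ _ := by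
          gcongr
          exact sum_range_natCast_le_tsum hg (fun n => by positivity) k
  calc ‖tm (fun j => V j + g j) E k 0‖
      ≤ A * (k + 1) * ∏ j ∈ range k, (1 + (j + 1) * (4 * A * |g j|)) := by
        refine le_mul_prod_of_le_add_sum (u := fun k => ‖tm (fun j => V j + g j) E k 0‖)
          (b := fun j => 4 * A * |g j|) hA (fun j => by positivity) (fun k => ?_) k
        simpa using norm_tm_add_le V g E A hV k 0
    _ ≤ A * (k + 1) * Real.exp (4 * A * ∑' n : ℤ, (1 + |(n : ℝ)|) * |g n|) := by
        gcongr
        exact (Real.prod_one_add_le_exp_sum _ fun j => by positivity).trans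
          (Real.exp_le_exp.mpr hsum)

theorem stmt9_general (V g : ℤ → ℝ) (E : ℝ) (C' : ℝ)
    (hM : ∀ n : ℤ, ∀ k : ℕ, 1 ≤ k → ‖tm V E k n‖ ≤ C' * k)
    (hg : Summable fun n : ℤ => (1 + |(n : ℝ)|) * |g n|) :
    ∃ C'' > 0, ∀ k : ℕ, 1 ≤ k → ‖tm (fun j => V j + g j) E k 0‖ ≤ C'' * k := by
  set D := max C' 1
  set S := ∑' n : ℤ, (1 + |(n : ℝ)|) * |g n|
  have hD : 0 < D := zero_lt_one.trans_le (le_max_right _ _)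
  refine ⟨2 * D * Real.exp (4 * D * S), by positivity, fun k hk => ?_⟩
  have hk : (1 : ℝ) ≤ k := by exact_mod_cast hk
  have hDS : 0 < D * Real.exp (4 * D * S) := by positivity
  calc ‖tm (fun j => V j + g j) E k 0‖ ≤ D * (k + 1) * Real.exp (4 * D * S) :=
        norm_tm_add_le_mul_exp V g E D hD.le (norm_tm_le_max_mul_succ hM) hg k
    _ ≤ 2 * D * Real.exp (4 * D * S) * k := by nlinarith

theorem stmt9 (V g : ℤ → ℝ) (E : ℝ) (C' : ℝ) (hC' : 0 < C')
    (hM : ∀ n : ℤ, ∀ k : ℕ, 1 ≤ k → ‖tm V E k n‖ ≤ C' * k)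
    (hg : Summable fun n : ℤ => (1 + |(n : ℝ)|) * |g n|) :
    ∃ C'' > 0, ∀ k : ℕ, 1 ≤ k → ‖tm (fun j => V j + g j) E k 0‖ ≤ C'' * k :=
  stmt9_general V g E C' hM hg

end
end

section
/- Let a ∈ {1, −1}, let c ∈ ℝ with c ≠ 0, set A = [[a, c], [0, a]], and let R : ℕ → M₂(ℝ) satisfy Σ_{n≥0} (n+1)·‖R(n)‖ < ∞ and det(A + R(n)) ≠ 0 for every n. Then no solution φ : ℕ → ℝ² of φ(n+1) = (A + R(n))·φ(n) with φ(0) ≠ 0 converges to the zero vector as n → ∞. -/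
/-!
Suppose `φ n → 0` and put `e n = 2 ‖R n‖ ‖φ n‖`. Multiplying by `aⁿ` (note `a⁻¹ = a`) turns the
second coordinate into a null sequence with increments bounded by `e n`, so
`(n + 1) |φ n 1| ≤ ∑_{k ≥ n} (k + 1) e k`. Hence the first coordinate of `A⁻ⁿ φ n` tends to `0`, and
its increments are `O((n + 1) e n)`. Altogether `‖φ n‖ ≤ C ∑_{k ≥ n} (k + 1) ‖R k‖ ‖φ k‖`.
Taking `n = N` with `C ∑_{k ≥ N} (k + 1) ‖R k‖ < 1` forces this tail, hence `φ N`, to vanish, and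
since all the matrices `A + R n` are invertible, `φ 0 = 0`.
-/

attribute [local instance] Matrix.normedAddCommGroup

open Filter Topology Matrix

theorem Matrix.norm_mulVec_le_card_mul {m n α : Type*} [Fintype m] [Fintype n] [NormedRing α]
    (M : Matrix m n α) (v : n → α) : ‖M *ᵥ v‖ ≤ Fintype.card n * ‖M‖ * ‖v‖ := by
  refine (pi_norm_le_iff_of_nonneg (by positivity)).2 fun i => ?_
  calc ‖(M *ᵥ v) i‖ = ‖∑ j, M i j * v j‖ := rfl
    _ ≤ ∑ j, ‖M i j‖ * ‖v j‖ :=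
      (norm_sum_le _ _).trans (Finset.sum_le_sum fun j _ => norm_mul_le _ _)
    _ ≤ ∑ _j : n, ‖M‖ * ‖v‖ := Finset.sum_le_sum fun j _ =>
      mul_le_mul M.norm_entry_le_entrywise_sup_norm (norm_le_pi_norm v j)
        (norm_nonneg _) (norm_nonneg _)
    _ = Fintype.card n * ‖M‖ * ‖v‖ := by
      rw [Finset.sum_const, Finset.card_univ, nsmul_eq_mul, mul_assoc]

theorem Matrix.eq_zero_of_mulVec_recurrence {n R : Type*} [Fintype n] [DecidableEq n] [CommRing R]
    [NoZeroDivisors R] {M : ℕ → Matrix n n R} {φ : ℕ → n → R} (hM : ∀ k, (M k).det ≠ 0)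
    (hφ : ∀ k, φ (k + 1) = M k *ᵥ φ k) {N : ℕ} (hN : φ N = 0) : φ 0 = 0 := by
  induction N with
  | zero => exact hN
  | succ N ih => exact ih (eq_zero_of_mulVec_eq_zero (hM N) (hφ N ▸ hN))

theorem abs_le_tsum_of_abs_sub_le_of_tendsto_zero {x d : ℕ → ℝ} (hx : Tendsto x atTop (𝓝 0))
    (hd : Summable d) (hxd : ∀ n, |x (n + 1) - x n| ≤ d n) (n : ℕ) :
    |x n| ≤ ∑' k, d (n + k) := by
  simpa [Real.dist_eq] using dist_le_tsum_of_dist_le_of_tendsto d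
    (fun k => by rw [Real.dist_eq, abs_sub_comm]; exact hxd k) hd hx n

theorem tsum_nat_add_le_of_le {q : ℕ → ℝ} (hq : ∀ n, 0 ≤ q n) (hs : Summable q) {n m : ℕ}
    (hnm : n ≤ m) : ∑' k, q (m + k) ≤ ∑' k, q (n + k) := by
  refine Summable.tsum_le_tsum_of_inj (fun k => m - n + k) (add_right_injective _)
    (fun _ _ => hq _) (fun k => by rw [← add_assoc, Nat.add_sub_cancel' hnm])
    (hs.comp_injective (add_right_injective m)) (hs.comp_injective (add_right_injective n))

theorem exists_eq_zero_of_le_mul_tsum_nat_add {p r : ℕ → ℝ} {C : ℝ} (hC : 0 ≤ C)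
    (hp : ∀ n, 0 ≤ p n) (hpb : BddAbove (Set.range p)) (hr : ∀ n, 0 ≤ r n) (hrs : Summable r)
    (h : ∀ n, p n ≤ C * ∑' k, r (n + k) * p (n + k)) : ∃ N, p N = 0 := by
  obtain ⟨B, hB⟩ := hpb
  have hrp : Summable fun n => r n * p n :=
    (hrs.mul_right B).of_nonneg_of_le (fun n => mul_nonneg (hr n) (hp n))
      (fun n => mul_le_mul_of_nonneg_left (hB ⟨n, rfl⟩) (hr n))
  set T : ℕ → ℝ := fun n => ∑' k, r (n + k) * p (n + k)
  have hT : ∀ n, 0 ≤ T n := fun n => tsum_nonneg fun k => mul_nonneg (hr _) (hp _)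
  obtain ⟨N, hN⟩ : ∃ N, C * ∑' k, r (N + k) < 1 := by
    have := (tendsto_sum_nat_add r).const_mul C
    rw [mul_zero] at this
    obtain ⟨N, hN⟩ := (this.eventually (gt_mem_nhds one_pos)).exists
    exact ⟨N, by simpa only [add_comm] using hN⟩
  -- `T` is antitone, so `p (N + k) ≤ C * T N` for all `k`.
  have hTN : T N ≤ (C * ∑' k, r (N + k)) * T N := by
    calc T N ≤ ∑' k, r (N + k) * (C * T N) :=
          Summable.tsum_le_tsum (fun k => mul_le_mul_of_nonneg_left
            ((h _).trans (mul_le_mul_of_nonneg_left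
              (tsum_nat_add_le_of_le (fun n => mul_nonneg (hr n) (hp n)) hrp
                (Nat.le_add_right N k)) hC)) (hr _))
            (hrp.comp_injective (add_right_injective N))
            ((hrs.comp_injective (add_right_injective N)).mul_right _)
      _ = (C * ∑' k, r (N + k)) * T N := by rw [tsum_mul_right]; ring
  have hTN0 : T N = 0 := by nlinarith [hT N]
  refine ⟨N, le_antisymm ((h N).trans_eq ?_) (hp N)⟩
  rw [show ∑' k, r (N + k) * p (N + k) = T N from rfl, hTN0, mul_zero]

section PerturbedJordanBlock

variable {a c : ℝ} {x y w₀ w₁ e : ℕ → ℝ}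

theorem abs_pow_eq_one_of_mul_self_eq_one (ha : a * a = 1) (n : ℕ) : |a ^ n| = 1 := by
  have : |a| = 1 := by nlinarith [abs_nonneg a, abs_mul_abs_self a]
  rw [abs_pow, this, one_pow]

theorem succ_mul_abs_le_tsum_of_perturbed_scalar (ha : a * a = 1)
    (hy : ∀ n, y (n + 1) = a * y n + w₁ n) (hw₁ : ∀ n, |w₁ n| ≤ e n)
    (he : Summable fun n : ℕ => ((n : ℝ) + 1) * e n) (hy0 : Tendsto y atTop (𝓝 0)) (n : ℕ) :
    ((n : ℝ) + 1) * |y n| ≤ ∑' k, (((n + k : ℕ) : ℝ) + 1) * e (n + k) := by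
  have he0 : ∀ n, 0 ≤ e n := fun n => (abs_nonneg _).trans (hw₁ n)
  have hes : Summable e := he.of_nonneg_of_le he0
    fun n => le_mul_of_one_le_left (he0 n) (by linarith [n.cast_nonneg (α := ℝ)])
  -- Since `a⁻¹ = a`, scaling by `aⁿ` removes the factor `a` from the recurrence.
  set u : ℕ → ℝ := fun n => a ^ n * y n
  have hu : ∀ n, |u n| = |y n| := fun n => by
    rw [abs_mul, abs_pow_eq_one_of_mul_self_eq_one ha, one_mul]
  have hu0 : Tendsto u atTop (𝓝 0) := (tendsto_zero_iff_abs_tendsto_zero u).2 <| by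
    simpa only [Function.comp_def, hu, abs_zero] using hy0.abs
  have hstep : ∀ n, |u (n + 1) - u n| ≤ e n := fun n => by
    have : u (n + 1) - u n = a ^ (n + 1) * w₁ n := by
      simp only [u, hy]; linear_combination (a ^ n * y n) * ha
    rw [this, abs_mul, abs_pow_eq_one_of_mul_self_eq_one ha, one_mul]
    exact hw₁ n
  calc ((n : ℝ) + 1) * |y n| = ((n : ℝ) + 1) * |u n| := by rw [hu]
    _ ≤ ((n : ℝ) + 1) * ∑' k, e (n + k) := by
      gcongr; exact abs_le_tsum_of_abs_sub_le_of_tendsto_zero hu0 hes hstep n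
    _ = ∑' k, ((n : ℝ) + 1) * e (n + k) := tsum_mul_left.symm
    _ ≤ ∑' k, (((n + k : ℕ) : ℝ) + 1) * e (n + k) :=
      Summable.tsum_le_tsum (fun k => mul_le_mul_of_nonneg_right
          (by push_cast; linarith [k.cast_nonneg (α := ℝ)]) (he0 _))
        ((hes.comp_injective (add_right_injective n)).mul_left _)
        (he.comp_injective (add_right_injective n))

theorem abs_le_tsum_of_perturbed_jordan (ha : a * a = 1)
    (hx : ∀ n, x (n + 1) = a * x n + c * y n + w₀ n) (hy : ∀ n, y (n + 1) = a * y n + w₁ n)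
    (hw₀ : ∀ n, |w₀ n| ≤ e n) (hw₁ : ∀ n, |w₁ n| ≤ e n)
    (he : Summable fun n : ℕ => ((n : ℝ) + 1) * e n) (hx0 : Tendsto x atTop (𝓝 0))
    (hy0 : Tendsto y atTop (𝓝 0)) (n : ℕ) :
    |x n| ≤ (1 + 2 * |c|) * ∑' k, (((n + k : ℕ) : ℝ) + 1) * e (n + k) := by
  set E : ℕ → ℝ := fun n => ∑' k, (((n + k : ℕ) : ℝ) + 1) * e (n + k)
  have hyE : ∀ n : ℕ, (n : ℝ) * |y n| ≤ E n := fun n =>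
    (mul_le_mul_of_nonneg_right (by linarith) (abs_nonneg _)).trans
      (succ_mul_abs_le_tsum_of_perturbed_scalar ha hy hw₁ he hy0 n)
  have hE0 : Tendsto E atTop (𝓝 0) := by
    simpa only [add_comm] using tendsto_sum_nat_add fun j : ℕ => ((j : ℝ) + 1) * e j
  have hpow := abs_pow_eq_one_of_mul_self_eq_one ha
  -- `z n = (A⁻ⁿ ![x n, y n]) 0` for `A = !![a, c; 0, a]`: its increments are `O((n + 1) e n)`,
  -- and the correction `n c aⁿ⁺¹ y n` tends to `0` by `hyE`.
  set z : ℕ → ℝ := fun n => a ^ n * x n - n * c * a ^ (n + 1) * y n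
  have hcorr : ∀ n, |n * c * a ^ (n + 1) * y n| ≤ |c| * E n := fun n => by
    rw [abs_mul, abs_mul, abs_mul, hpow, Nat.abs_cast, mul_one, mul_comm (n : ℝ), mul_assoc]
    exact mul_le_mul_of_nonneg_left (hyE n) (abs_nonneg c)
  have hz0 : Tendsto z atTop (𝓝 0) := by
    have hv0 : Tendsto (fun n => a ^ n * x n) atTop (𝓝 0) :=
      (tendsto_zero_iff_abs_tendsto_zero _).2 <| by
        simpa only [Function.comp_def, abs_mul, hpow, one_mul, abs_zero] using hx0.abs
    have hcorr0 : Tendsto (fun n => n * c * a ^ (n + 1) * y n) atTop (𝓝 0) :=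
      squeeze_zero_norm hcorr (by simpa using hE0.const_mul |c|)
    simpa using hv0.sub hcorr0
  have hstep : ∀ n, |z (n + 1) - z n| ≤ (1 + |c|) * (((n : ℝ) + 1) * e n) := fun n => by
    have : z (n + 1) - z n = a ^ (n + 1) * w₀ n - (n + 1) * c * a ^ (n + 2) * w₁ n := by
      simp only [z, hx, hy]; push_cast
      linear_combination (a ^ n * x n - (n + 1) * c * a ^ (n + 1) * y n) * ha
    have he0 : 0 ≤ e n := (abs_nonneg _).trans (hw₀ n)
    calc |z (n + 1) - z n| ≤ |a ^ (n + 1) * w₀ n| + |(n + 1) * c * a ^ (n + 2) * w₁ n| := by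
          rw [this]; exact abs_sub _ _
      _ = |w₀ n| + ((n : ℝ) + 1) * |c| * |w₁ n| := by
          rw [abs_mul, abs_mul, abs_mul, abs_mul, hpow, hpow,
            abs_of_nonneg (by positivity : (0 : ℝ) ≤ n + 1)]; ring
      _ ≤ e n + ((n : ℝ) + 1) * |c| * e n := by gcongr <;> [exact hw₀ n; exact hw₁ n]
      _ ≤ (1 + |c|) * (((n : ℝ) + 1) * e n) := by nlinarith [n.cast_nonneg (α := ℝ)]
  have hz : |z n| ≤ (1 + |c|) * E n := by
    rw [← tsum_mul_left]
    exact abs_le_tsum_of_abs_sub_le_of_tendsto_zero hz0 (he.mul_left _) hstep n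
  calc |x n| = |z n + n * c * a ^ (n + 1) * y n| := by
        rw [show z n + n * c * a ^ (n + 1) * y n = a ^ n * x n by simp only [z]; ring, abs_mul,
          hpow, one_mul]
    _ ≤ (1 + |c|) * E n + |c| * E n := (abs_add_le _ _).trans (add_le_add hz (hcorr n))
    _ ≤ (1 + 2 * |c|) * E n := by linarith

theorem norm_le_tsum_of_perturbed_jordan {φ w : ℕ → Fin 2 → ℝ} (ha : a * a = 1)
    (hφ : ∀ n, φ (n + 1) = !![a, c; 0, a] *ᵥ φ n + w n) (hw : ∀ n, ‖w n‖ ≤ e n)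
    (he : Summable fun n : ℕ => ((n : ℝ) + 1) * e n) (hφ0 : Tendsto φ atTop (𝓝 0)) (n : ℕ) :
    ‖φ n‖ ≤ (1 + 2 * |c|) * ∑' k, (((n + k : ℕ) : ℝ) + 1) * e (n + k) := by
  have hx (n : ℕ) : φ (n + 1) 0 = a * φ n 0 + c * φ n 1 + w n 0 := by
    simp [hφ, vecHead, vecTail]
  have hy (n : ℕ) : φ (n + 1) 1 = a * φ n 1 + w n 1 := by
    simp [hφ, vecHead, vecTail]
  have hw' (i : Fin 2) (n : ℕ) : |w n i| ≤ e n := (norm_le_pi_norm (w n) i).trans (hw n)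
  have hcoord (i : Fin 2) : Tendsto (fun n => φ n i) atTop (𝓝 0) :=
    ((continuous_apply i).tendsto 0).comp hφ0
  have hE : 0 ≤ ∑' k, (((n + k : ℕ) : ℝ) + 1) * e (n + k) :=
    tsum_nonneg fun k => mul_nonneg (by positivity) ((norm_nonneg _).trans (hw _))
  have h₁ := succ_mul_abs_le_tsum_of_perturbed_scalar ha hy (hw' 1) he (hcoord 1) n
  refine (pi_norm_le_iff_of_nonneg (by positivity)).2 (Fin.forall_fin_two.2 ⟨?_, ?_⟩)
  · exact abs_le_tsum_of_perturbed_jordan ha hx hy (hw' 0) (hw' 1) he (hcoord 0) (hcoord 1) n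
  · rw [Real.norm_eq_abs]
    nlinarith [abs_nonneg (φ n 1), abs_nonneg c, n.cast_nonneg (α := ℝ)]

end PerturbedJordanBlock

theorem stmt10_general (a c : ℝ) (ha : a = 1 ∨ a = -1)
    (R : ℕ → Matrix (Fin 2) (Fin 2) ℝ)
    (hR : Summable fun n : ℕ => ((n : ℝ) + 1) * ‖R n‖)
    (hdet : ∀ n : ℕ, (!![a, c; 0, a] + R n).det ≠ 0)
    (φ : ℕ → Fin 2 → ℝ)
    (hφ : ∀ n : ℕ, φ (n + 1) = (!![a, c; 0, a] + R n).mulVec (φ n))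
    (h0 : φ 0 ≠ 0) :
    ¬ Filter.Tendsto φ Filter.atTop (nhds 0) := by
  intro hlim
  have ha2 : a * a = 1 := by rcases ha with rfl | rfl <;> norm_num
  obtain ⟨B, hB⟩ := (by simpa using hlim.norm : Tendsto (‖φ ·‖) atTop (𝓝 0)).bddAbove_range
  have hw (n : ℕ) : ‖R n *ᵥ φ n‖ ≤ 2 * (‖R n‖ * ‖φ n‖) :=
    (R n).norm_mulVec_le_card_mul (φ n) |>.trans_eq <| by rw [Fintype.card_fin]; push_cast; ring
  have he : Summable fun n : ℕ => ((n : ℝ) + 1) * (2 * (‖R n‖ * ‖φ n‖)) :=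
    (hR.mul_left (2 * B)).of_nonneg_of_le (fun n => by positivity) fun n => by
      nlinarith [hB ⟨n, rfl⟩, mul_nonneg (n.cast_add_one_pos (α := ℝ)).le (norm_nonneg (R n))]
  have hbound (n : ℕ) :
      ‖φ n‖ ≤ (1 + 2 * |c|) * ∑' k, 2 * (((n + k : ℕ) : ℝ) + 1) * ‖R (n + k)‖ * ‖φ (n + k)‖ :=
    (norm_le_tsum_of_perturbed_jordan ha2 (fun n => by rw [hφ, add_mulVec]) hw he hlim n).trans_eq
      (by congr 1; exact tsum_congr fun k => by ring)
  obtain ⟨N, hN⟩ := exists_eq_zero_of_le_mul_tsum_nat_add (p := (‖φ ·‖))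
    (r := fun n => 2 * ((n : ℝ) + 1) * ‖R n‖) (by positivity) (fun n => norm_nonneg _) ⟨B, hB⟩
    (fun n => by positivity) (by simpa only [mul_assoc] using hR.mul_left 2) hbound
  exact h0 (eq_zero_of_mulVec_recurrence hdet hφ (norm_eq_zero.1 hN))

theorem stmt10 (a c : ℝ) (ha : a = 1 ∨ a = -1) (hc : c ≠ 0)
    (R : ℕ → Matrix (Fin 2) (Fin 2) ℝ)
    (hR : Summable fun n : ℕ => ((n : ℝ) + 1) * ‖R n‖)
    (hdet : ∀ n : ℕ, (!![a, c; 0, a] + R n).det ≠ 0)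
    (φ : ℕ → Fin 2 → ℝ)
    (hφ : ∀ n : ℕ, φ (n + 1) = (!![a, c; 0, a] + R n).mulVec (φ n))
    (h0 : φ 0 ≠ 0) :
    ¬ Filter.Tendsto φ Filter.atTop (nhds 0) :=
  stmt10_general a c ha R hR hdet φ hφ h0
end

section
/- Let c ∈ ℝ with c ≠ 0, set A = [[1, c], [0, 1]], and let R : ℕ → M₂(ℝ) satisfy Σ_{n≥0} (n+1)·‖R(n)‖ < ∞ and det(A + R(n)) ≠ 0 for every n. Then for every ε > 0 there exists a solution φ : ℕ → ℝ² of φ(n+1) = (A + R(n))·φ(n) such that limsup_{n→∞} ‖φ(n) − (1, 0)ᵀ‖ ≤ ε. -/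
/-!
Since `A = transvection 0 1 c` fixes `e₁ = ![1, 0]`, writing `φ = e₁ + ψ` turns the system into
`ψ (n + 1) = A ψ n + R n (e₁ + ψ n)`, whose bounded solutions are the fixed points of
`ψ ↦ -∑_{k ≥ n} A ^ (n - k - 1) R k (e₁ + ψ k)`. The powers `A ^ (-m) = transvection 0 1 (-m c)`
grow only linearly in `m`, so the weight `(k + 1) ‖R k‖` makes this map a contraction on
bounded sequences once the system is started at a late enough time `N`. Invertibility of the
matrices `A + R n` then carries the solution found on `[N, ∞)` back to time `0`.
-/

attribute [local instance] Matrix.normedAddCommGroup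

noncomputable section

open Filter Matrix
open scoped BoundedContinuousFunction

namespace Matrix

variable {m n α : Type*}

theorem norm_mulVec_le_card_mul_s11 [Fintype m] [Fintype n] [NormedRing α] (A : Matrix m n α)
    (v : n → α) : ‖A *ᵥ v‖ ≤ Fintype.card n * ‖A‖ * ‖v‖ := by
  refine (pi_norm_le_iff_of_nonneg (by positivity)).2 fun i => ?_
  calc ‖(A *ᵥ v) i‖ ≤ ∑ j, ‖A i j‖ * ‖v j‖ :=
        (norm_sum_le _ _).trans (Finset.sum_le_sum fun j _ => norm_mul_le _ _)
    _ ≤ ∑ _j : n, ‖A‖ * ‖v‖ := by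
        gcongr with j
        exacts [norm_entry_le_entrywise_sup_norm A, norm_le_pi_norm v j]
    _ = Fintype.card n * ‖A‖ * ‖v‖ := by simp [mul_assoc]

variable [Fintype n] [DecidableEq n] [NormedCommRing α] (i j : n)

theorem norm_transvection_mulVec_le (t : α) (v : n → α) :
    ‖transvection i j t *ᵥ v‖ ≤ (1 + ‖t‖) * ‖v‖ := by
  rw [transvection, add_mulVec, one_mulVec, single_mulVec, add_mul, one_mul]
  refine (norm_add_le _ _).trans ?_
  rw [← Pi.single, Pi.norm_single]
  gcongr
  exact (norm_mul_le _ _).trans (by gcongr; exact norm_le_pi_norm v j)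

theorem transvection_mulVec_of_apply_eq_zero (t : α) {v : n → α} (hv : v j = 0) :
    transvection i j t *ᵥ v = v := by
  simp [transvection, add_mulVec, single_mulVec, hv]

theorem transvection_zero_one_eq (c : ℝ) : transvection (0 : Fin 2) 1 c = !![1, c; 0, 1] := by
  ext a b
  fin_cases a <;> fin_cases b <;> simp [transvection]

end Matrix

theorem HasSum.matrix_mulVec {ι m n R : Type*} [Fintype n] [CommSemiring R] [TopologicalSpace R]
    [IsTopologicalSemiring R] (A : Matrix m n R) {f : ι → n → R} {a : n → R} (hf : HasSum f a) :
    HasSum (fun i => A *ᵥ f i) (A *ᵥ a) :=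
  hf.map A.mulVecLin (Continuous.matrix_mulVec continuous_const continuous_id)

section TailSum

variable (c : ℝ) (R : ℕ → Matrix (Fin 2) (Fin 2) ℝ)

/-- With `A = transvection 0 1 c`, this is the variation-of-constants sum
`∑_{k ≥ n} A ^ (n - k - 1) * R k * u k`. -/
def tailSum (u : ℕ → Fin 2 → ℝ) (n : ℕ) : Fin 2 → ℝ :=
  ∑' j : ℕ, transvection 0 1 (-((j : ℝ) + 1) * c) *ᵥ (R (j + n) *ᵥ u (j + n))

variable {c R} {w : ℕ → ℝ} {u v : ℕ → Fin 2 → ℝ} {B B' : ℝ}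

theorem norm_tailSum_term_le (hRw : ∀ k, 2 * (1 + |c| * (k + 1)) * ‖R k‖ ≤ w k)
    (n j : ℕ) (x : Fin 2 → ℝ) :
    ‖transvection 0 1 (-((j : ℝ) + 1) * c) *ᵥ (R (j + n) *ᵥ x)‖ ≤ w (j + n) * ‖x‖ := by
  have hRx := norm_mulVec_le_card_mul_s11 (R (j + n)) x
  rw [Fintype.card_fin, Nat.cast_ofNat] at hRx
  have ht : ‖-((j : ℝ) + 1) * c‖ ≤ |c| * ((j + n : ℕ) + 1) := by
    rw [Real.norm_eq_abs, abs_mul, abs_neg, abs_of_pos (by positivity), mul_comm]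
    gcongr
    linarith [(n.cast_nonneg : (0 : ℝ) ≤ n)]
  calc _ ≤ (1 + ‖-((j : ℝ) + 1) * c‖) * (2 * ‖R (j + n)‖ * ‖x‖) :=
        (norm_transvection_mulVec_le (0 : Fin 2) 1 _ _).trans (by gcongr)
    _ ≤ (1 + |c| * ((j + n : ℕ) + 1)) * (2 * ‖R (j + n)‖ * ‖x‖) := by gcongr
    _ = 2 * (1 + |c| * ((j + n : ℕ) + 1)) * ‖R (j + n)‖ * ‖x‖ := by ring
    _ ≤ w (j + n) * ‖x‖ := by gcongr; exact hRw (j + n)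

theorem summable_tailSum_term (hRw : ∀ k, 2 * (1 + |c| * (k + 1)) * ‖R k‖ ≤ w k)
    (hw : Summable w) (hu : ∀ k, ‖u k‖ ≤ B) (n : ℕ) :
    Summable fun j : ℕ => transvection 0 1 (-((j : ℝ) + 1) * c) *ᵥ (R (j + n) *ᵥ u (j + n)) := by
  refine .of_norm_bounded (((summable_nat_add_iff n).2 hw).mul_right B) fun j => ?_
  have hw0 : 0 ≤ w (j + n) := (by positivity : (0 : ℝ) ≤ _).trans (hRw _)
  exact (norm_tailSum_term_le hRw n j _).trans (mul_le_mul_of_nonneg_left (hu _) hw0)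

theorem norm_tailSum_le (hRw : ∀ k, 2 * (1 + |c| * (k + 1)) * ‖R k‖ ≤ w k)
    (hw : Summable w) (hu : ∀ k, ‖u k‖ ≤ B) (n : ℕ) :
    ‖tailSum c R u n‖ ≤ (∑' k, w k) * B := by
  have hw0 : ∀ k, 0 ≤ w k := fun k => (by positivity : (0 : ℝ) ≤ _).trans (hRw k)
  have hwn : Summable fun j => w (j + n) := (summable_nat_add_iff n).2 hw
  calc ‖tailSum c R u n‖ ≤ (∑' j, w (j + n)) * B :=
        tsum_of_norm_bounded (hwn.hasSum.mul_right B) fun j =>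
          (norm_tailSum_term_le hRw n j _).trans (mul_le_mul_of_nonneg_left (hu _) (hw0 _))
    _ ≤ (∑' k, w k) * B :=
        mul_le_mul_of_nonneg_right (hwn.tsum_le_tsum_of_inj (· + n) (add_left_injective n)
          (fun k _ => hw0 k) (fun _ => le_rfl) hw) ((norm_nonneg _).trans (hu 0))

theorem tailSum_sub (hRw : ∀ k, 2 * (1 + |c| * (k + 1)) * ‖R k‖ ≤ w k)
    (hw : Summable w) (hu : ∀ k, ‖u k‖ ≤ B) (hv : ∀ k, ‖v k‖ ≤ B') (n : ℕ) :
    tailSum c R u n - tailSum c R v n = tailSum c R (u - v) n := by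
  rw [tailSum, tailSum, ← (summable_tailSum_term hRw hw hu n).tsum_sub
    (summable_tailSum_term hRw hw hv n), tailSum]
  simp only [Pi.sub_apply, mulVec_sub]

theorem transvection_mulVec_tailSum (hRw : ∀ k, 2 * (1 + |c| * (k + 1)) * ‖R k‖ ≤ w k)
    (hw : Summable w) (hu : ∀ k, ‖u k‖ ≤ B) (n : ℕ) :
    transvection 0 1 c *ᵥ tailSum c R u n = R n *ᵥ u n + tailSum c R u (n + 1) := by
  have hsum := summable_tailSum_term hRw hw hu n
  have hA := hsum.hasSum.matrix_mulVec (transvection 0 1 c)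
  rw [tailSum, ← hA.tsum_eq, hA.summable.tsum_eq_zero_add, tailSum]
  simp only [mulVec_mulVec, ← Matrix.mul_assoc,
    transvection_mul_transvection_same (0 : Fin 2) 1 (by decide)]
  congr 1
  · simp
  · refine tsum_congr fun j => ?_
    rw [show j + 1 + n = j + (n + 1) by omega]
    congr 3
    push_cast
    ring

theorem norm_vecCons_one_zero_le : ‖(![1, 0] : Fin 2 → ℝ)‖ ≤ 1 :=
  (pi_norm_le_iff_of_nonneg zero_le_one).2 fun i => by fin_cases i <;> simp

theorem exists_eq_neg_tailSum (hRw : ∀ k, 2 * (1 + |c| * (k + 1)) * ‖R k‖ ≤ w k)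
    (hw : Summable w) {δ : ℝ} (hwδ : ∑' k, w k ≤ δ) (hδ : δ ≤ 1 / 2) :
    ∃ ψ : ℕ → Fin 2 → ℝ, (∀ n, ‖ψ n‖ ≤ 2 * δ) ∧
      ∀ n, ψ n = -tailSum c R (fun k => ![1, 0] + ψ k) n := by
  have hδ0 : 0 ≤ δ :=
    (tsum_nonneg fun k => (by positivity : (0 : ℝ) ≤ _).trans (hRw k)).trans hwδ
  have hu (ψ : ℕ →ᵇ (Fin 2 → ℝ)) (k : ℕ) : ‖![1, 0] + ψ k‖ ≤ 1 + ‖ψ‖ :=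
    (norm_add_le _ _).trans (add_le_add norm_vecCons_one_zero_le (ψ.norm_coe_le_norm k))
  have hTψ (ψ : ℕ →ᵇ (Fin 2 → ℝ)) (n : ℕ) :
      ‖-tailSum c R (fun k => ![1, 0] + ψ k) n‖ ≤ δ * (1 + ‖ψ‖) := by
    rw [norm_neg]
    exact (norm_tailSum_le hRw hw (hu ψ) n).trans
      (mul_le_mul_of_nonneg_right hwδ (by positivity))
  let T (ψ : ℕ →ᵇ (Fin 2 → ℝ)) : ℕ →ᵇ (Fin 2 → ℝ) :=
    .ofNormedAddCommGroup _ continuous_of_discreteTopology _ (hTψ ψ)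
  have hT : ContractingWith (1 / 2) T := by
    refine ⟨by norm_num, LipschitzWith.of_dist_le_mul fun ψ ψ' => ?_⟩
    rw [BoundedContinuousFunction.dist_le (by positivity)]
    intro n
    have hsub : T ψ n - T ψ' n = -tailSum c R (ψ - ψ') n := by
      change -tailSum c R _ n - -tailSum c R _ n = _
      rw [neg_sub_neg, ← neg_sub, tailSum_sub hRw hw (hu ψ) (hu ψ') n]
      congr 2
      exact funext fun k => add_sub_add_left_eq_sub _ _ _
    rw [dist_eq_norm, hsub, norm_neg, dist_eq_norm]
    calc _ ≤ (∑' k, w k) * ‖ψ - ψ'‖ :=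
          norm_tailSum_le hRw hw (fun k => (ψ - ψ').norm_coe_le_norm k) n
      _ ≤ _ := by
          gcongr
          exact hwδ.trans (by norm_num [hδ])
  obtain ⟨ψ, hψ⟩ : ∃ ψ, T ψ = ψ := ⟨_, hT.fixedPoint_isFixedPt⟩
  have hψ_le : ‖ψ‖ ≤ δ * (1 + ‖ψ‖) := by
    conv_lhs => rw [← hψ]
    exact BoundedContinuousFunction.norm_ofNormedAddCommGroup_le _ (by positivity) _
  refine ⟨ψ, fun n => (ψ.norm_coe_le_norm n).trans (by nlinarith [norm_nonneg ψ]),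
    fun n => (DFunLike.congr_fun hψ n).symm⟩

theorem exists_solution_norm_sub_le (hRw : ∀ k, 2 * (1 + |c| * (k + 1)) * ‖R k‖ ≤ w k)
    (hw : Summable w) {δ : ℝ} (hwδ : ∑' k, w k ≤ δ) (hδ : δ ≤ 1 / 2) :
    ∃ φ : ℕ → Fin 2 → ℝ, (∀ n, φ (n + 1) = (transvection 0 1 c + R n) *ᵥ φ n) ∧
      ∀ n, ‖φ n - ![1, 0]‖ ≤ 2 * δ := by
  obtain ⟨ψ, hψ_le, hψ⟩ := exists_eq_neg_tailSum hRw hw hwδ hδ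
  have hu (k : ℕ) : ‖![1, 0] + ψ k‖ ≤ 1 + 2 * δ :=
    (norm_add_le _ _).trans (add_le_add norm_vecCons_one_zero_le (hψ_le k))
  have he : transvection 0 1 c *ᵥ ![1, 0] = ![1, 0] :=
    transvection_mulVec_of_apply_eq_zero 0 1 c (by simp)
  refine ⟨fun k => ![1, 0] + ψ k, fun n => ?_, fun n => by
    rw [add_sub_cancel_left]
    exact hψ_le n⟩
  set u : ℕ → Fin 2 → ℝ := fun k => ![1, 0] + ψ k
  calc u (n + 1) = ![1, 0] - tailSum c R u (n + 1) := by
        rw [sub_eq_add_neg, ← hψ]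
    _ = transvection 0 1 c *ᵥ (![1, 0] - tailSum c R u n) + R n *ᵥ u n := by
        rw [mulVec_sub, he, transvection_mulVec_tailSum hRw hw hu]
        abel
    _ = (transvection 0 1 c + R n) *ᵥ u n := by
        rw [sub_eq_add_neg, ← hψ, add_mulVec]

end TailSum

theorem exists_solution_eq_of_isUnit_det {n K : Type*} [Fintype n] [DecidableEq n] [CommRing K]
    {B : ℕ → Matrix n n K} (hB : ∀ k, IsUnit (B k).det) (N : ℕ) (v : n → K) :
    ∃ φ : ℕ → n → K, (∀ k, φ (k + 1) = B k *ᵥ φ k) ∧ φ N = v := by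
  induction N generalizing v with
  | zero => exact ⟨fun k => Nat.rec v (fun k x => B k *ᵥ x) k, fun k => rfl, rfl⟩
  | succ N ih =>
    obtain ⟨φ, hφ, hφN⟩ := ih ((B N)⁻¹ *ᵥ v)
    refine ⟨φ, hφ, ?_⟩
    rw [hφ, hφN, mulVec_mulVec, mul_nonsing_inv _ (hB N), one_mulVec]

theorem stmt11_general (c : ℝ)
    (R : ℕ → Matrix (Fin 2) (Fin 2) ℝ)
    (hR : Summable fun n : ℕ => ((n : ℝ) + 1) * ‖R n‖)
    (hdet : ∀ n : ℕ, (!![(1 : ℝ), c; 0, 1] + R n).det ≠ 0)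
    (ε : ℝ) (hε : 0 < ε) :
    ∃ φ : ℕ → Fin 2 → ℝ,
      (∀ n : ℕ, φ (n + 1) = (!![(1 : ℝ), c; 0, 1] + R n).mulVec (φ n)) ∧
      Filter.limsup (fun n : ℕ => ‖φ n - ![1, 0]‖) Filter.atTop ≤ ε := by
  set δ := min (1 / 2) (ε / 2)
  set W : ℕ → ℝ := fun k => 2 * (1 + |c|) * (((k : ℝ) + 1) * ‖R k‖)
  obtain ⟨N, hN⟩ : ∃ N, ∑' k, W (k + N) < δ :=
    ((tendsto_sum_nat_add W).eventually_lt_const (by positivity)).exists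
  have hRW (k : ℕ) : 2 * (1 + |c| * (k + 1)) * ‖R (k + N)‖ ≤ W (k + N) := by
    have : 1 + |c| * ((k : ℝ) + 1) ≤ (1 + |c|) * (((k + N : ℕ) : ℝ) + 1) := by
      push_cast
      nlinarith [abs_nonneg c, k.cast_nonneg (α := ℝ), N.cast_nonneg (α := ℝ)]
    calc _ ≤ 2 * ((1 + |c|) * (((k + N : ℕ) : ℝ) + 1)) * ‖R (k + N)‖ := by gcongr
      _ = W (k + N) := by ring
  obtain ⟨ψ, hψ, hψ_near⟩ := exists_solution_norm_sub_le hRW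
    ((summable_nat_add_iff N).2 (hR.mul_left _)) hN.le (min_le_left _ _)
  obtain ⟨φ, hφ, hφN⟩ := exists_solution_eq_of_isUnit_det (fun n => (hdet n).isUnit) N (ψ 0)
  have hφψ (m : ℕ) : φ (m + N) = ψ m := by
    induction m with
    | zero => rwa [zero_add]
    | succ m ih => rw [Nat.add_right_comm, hφ, ih, hψ, transvection_zero_one_eq]
  refine ⟨φ, hφ, limsup_le_of_le (isCoboundedUnder_le_of_le atTop fun n => norm_nonneg _) ?_⟩
  filter_upwards [eventually_ge_atTop N] with n hn
  obtain ⟨m, rfl⟩ := Nat.exists_eq_add_of_le' hn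
  rw [hφψ]
  exact (hψ_near m).trans (by linarith [min_le_right (1 / 2 : ℝ) (ε / 2)])

theorem stmt11 (c : ℝ) (hc : c ≠ 0)
    (R : ℕ → Matrix (Fin 2) (Fin 2) ℝ)
    (hR : Summable fun n : ℕ => ((n : ℝ) + 1) * ‖R n‖)
    (hdet : ∀ n : ℕ, (!![(1 : ℝ), c; 0, 1] + R n).det ≠ 0)
    (ε : ℝ) (hε : 0 < ε) :
    ∃ φ : ℕ → Fin 2 → ℝ,
      (∀ n : ℕ, φ (n + 1) = (!![(1 : ℝ), c; 0, 1] + R n).mulVec (φ n)) ∧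
      Filter.limsup (fun n : ℕ => ‖φ n - ![1, 0]‖) Filter.atTop ≤ ε :=
  stmt11_general c R hR hdet ε hε
end
end

section
/- Let λ ∈ ℝ with |λ| > 1, let c ∈ ℝ, set A = [[λ, c], [0, λ⁻¹]], and let R : ℕ → M₂(ℝ) satisfy Σ_{n≥0} ‖R(n)‖ < ∞ and det(A + R(n)) ≠ 0 for every n. Then for every ε > 0 there exists a solution φ : ℕ → ℝ² of φ(n+1) = (A + R(n))·φ(n) such that limsup_{n→∞} |λ|^{−n} · ‖φ(n) − (λⁿ, 0)ᵀ‖ ≤ ε. -/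
attribute [local instance] Matrix.normedAddCommGroup

noncomputable section

/-!
Rescale by `λ⁻ⁿ`: the system becomes `x (n+1) = (λ⁻¹A + λ⁻¹R n) x n`, where `λ⁻¹A` is
power bounded (its eigenvalues are `1` and `λ⁻²`) and fixes `e₁`. By variation of constants and
the discrete Grönwall inequality, a summable perturbation of a power-bounded system started at
time `N` moves its trajectory by at most `K (exp (K ∑_{k ≥ N} ‖R k‖) - 1)` relative to the
unperturbed one, which is `< ε` for `N` large. Start the solution at `λ^N e₁` at time `N` and
extend it backwards to time `0`, which is possible because every `A + R n` is invertible.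
-/

open Finset Matrix Filter

theorem norm_sub_iterate_le_of_perturbation {E : Type*} [SeminormedAddCommGroup E]
    (B : E →+ E) {K : ℝ} (hK : 0 ≤ K) (hB : ∀ k v, ‖B^[k] v‖ ≤ K * ‖v‖)
    {x : ℕ → E} {e : ℕ → ℝ} (he : ∀ k, 0 ≤ e k)
    (hx : ∀ k, ‖x (k + 1) - B (x k)‖ ≤ e k * ‖x k‖) (m : ℕ) :
    ‖x m - B^[m] (x 0)‖ ≤ K * ‖x 0‖ * (Real.exp (K * ∑ k ∈ range m, e k) - 1) := by
  have variation_of_constants : ∀ m, x m - B^[m] (x 0) =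
      ∑ k ∈ range m, B^[m - 1 - k] (x (k + 1) - B (x k)) := fun m =>
    calc x m - B^[m] (x 0)
        = ∑ k ∈ range m, (B^[m - (k + 1)] (x (k + 1)) - B^[m - k] (x k)) := by
          rw [sum_range_sub (fun k => B^[m - k] (x k))]; simp
      _ = _ := sum_congr rfl fun k hk => by
          rw [iterate_map_sub, ← Function.iterate_succ_apply, Nat.succ_eq_add_one,
            show m - 1 - k + 1 = m - k by have := mem_range.1 hk; omega, Nat.sub_sub, add_comm 1]
  have hdefect : ∀ m, ‖x m - B^[m] (x 0)‖ ≤ ∑ k ∈ range m, K * e k * ‖x k‖ := fun m => by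
    rw [variation_of_constants]
    refine (norm_sum_le _ _).trans (sum_le_sum fun k _ => ?_)
    calc ‖B^[m - 1 - k] (x (k + 1) - B (x k))‖ ≤ K * ‖x (k + 1) - B (x k)‖ := hB _ _
      _ ≤ K * (e k * ‖x k‖) := by gcongr; exact hx k
      _ = K * e k * ‖x k‖ := by ring
  set Y : ℕ → ℝ := fun m => K * ‖x 0‖ + ∑ k ∈ range m, K * e k * ‖x k‖
  have hxY : ∀ m, ‖x m‖ ≤ Y m := fun m =>
    calc ‖x m‖ ≤ ‖B^[m] (x 0)‖ + ‖x m - B^[m] (x 0)‖ := norm_le_norm_add_norm_sub' _ _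
      _ ≤ Y m := add_le_add (hB m _) (hdefect m)
  have hYsucc : ∀ n ≥ 0, Y (n + 1) ≤ (1 + K * e n) * Y n + 0 := fun n _ => by
    have := mul_le_mul_of_nonneg_left (hxY n) (mul_nonneg hK (he n))
    simp only [Y, sum_range_succ]; nlinarith
  have hgronwall := discrete_gronwall (u := Y) (by positivity) hYsucc
    (fun n _ => mul_nonneg hK (he n)) (fun _ _ => le_rfl) (Nat.zero_le m)
  simp only [Y, sum_const_zero, add_zero, range_zero, sum_empty, ← range_eq_Ico, ← mul_sum]
    at hgronwall
  linarith [hdefect m]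

theorem exists_seq_succ_eq_apply_of_surjective {α : Type*} (f : ℕ → α → α)
    (hf : ∀ k, Function.Surjective (f k)) (N : ℕ) (v : α) :
    ∃ x : ℕ → α, (∀ k, x (k + 1) = f k (x k)) ∧ x N = v := by
  induction N generalizing v with
  | zero => exact ⟨fun k => Nat.rec v (fun k y => f k y) k, fun _ => rfl, rfl⟩
  | succ N ih =>
    obtain ⟨w, rfl⟩ := hf N v
    obtain ⟨x, hx, hxN⟩ := ih w
    exact ⟨x, hx, by rw [hx, hxN]⟩

theorem Matrix.norm_mulVec_le {m n : Type*} [Fintype m] [Fintype n] (M : Matrix m n ℝ)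
    (v : n → ℝ) : ‖M *ᵥ v‖ ≤ Fintype.card n * (‖M‖ * ‖v‖) := by
  refine pi_norm_le_iff_of_nonneg (by positivity) |>.2 fun i => ?_
  calc ‖(M *ᵥ v) i‖ ≤ ∑ j, ‖M i j‖ * ‖v j‖ := by
        simpa only [mulVec, dotProduct, norm_mul] using norm_sum_le univ (fun j => M i j * v j)
    _ ≤ ∑ _j : n, ‖M‖ * ‖v‖ := sum_le_sum fun j _ => by
        gcongr; exacts [M.norm_entry_le_entrywise_sup_norm, norm_le_pi_norm v j]
    _ = _ := by simp

theorem inv_pow_smul_mulVec_sub {n : Type*} [Fintype n] (lam : ℝ)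
    (A R : Matrix n n ℝ) (y : n → ℝ) (k : ℕ) :
    (lam ^ (k + 1))⁻¹ • ((A + R) *ᵥ y) - (lam⁻¹ • A) *ᵥ ((lam ^ k)⁻¹ • y)
      = lam⁻¹ • (R *ᵥ ((lam ^ k)⁻¹ • y)) := by
  rw [add_mulVec, smul_mulVec, mulVec_smul, mulVec_smul, pow_succ, mul_inv]
  module

theorem norm_inv_pow_smul_solution_sub_le {ι : Type*} [Fintype ι] {lam : ℝ} (hlam : 1 ≤ |lam|)
    (A : Matrix ι ι ℝ) (R : ℕ → Matrix ι ι ℝ) {φ : ℕ → ι → ℝ}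
    (hφ : ∀ n, φ (n + 1) = (A + R n) *ᵥ φ n) (k : ℕ) :
    ‖(lam ^ (k + 1))⁻¹ • φ (k + 1) - (lam⁻¹ • A) *ᵥ ((lam ^ k)⁻¹ • φ k)‖
      ≤ Fintype.card ι * ‖R k‖ * ‖(lam ^ k)⁻¹ • φ k‖ := by
  rw [hφ, inv_pow_smul_mulVec_sub, norm_smul, norm_inv, Real.norm_eq_abs, mul_assoc]
  calc |lam|⁻¹ * ‖R k *ᵥ ((lam ^ k)⁻¹ • φ k)‖ ≤ 1 * ‖R k *ᵥ ((lam ^ k)⁻¹ • φ k)‖ := by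
        gcongr; exact inv_le_one_of_one_le₀ hlam
    _ ≤ _ := by rw [one_mul]; exact (R k).norm_mulVec_le _

theorem norm_solution_sub_pow_smul_le {ι : Type*} [Fintype ι] {lam : ℝ} (hlam : 1 ≤ |lam|)
    {A : Matrix ι ι ℝ} {v : ι → ℝ} (hv : A *ᵥ v = lam • v) {K : ℝ} (hK : 0 ≤ K)
    (hB : ∀ k w, ‖((lam⁻¹ • A) *ᵥ ·)^[k] w‖ ≤ K * ‖w‖)
    {R : ℕ → Matrix ι ι ℝ} (hR : Summable fun n => ‖R n‖)
    {φ : ℕ → ι → ℝ} (hφ : ∀ n, φ (n + 1) = (A + R n) *ᵥ φ n) {N : ℕ} (hφN : φ N = lam ^ N • v)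
    (m : ℕ) :
    (|lam| ^ (m + N))⁻¹ * ‖φ (m + N) - lam ^ (m + N) • v‖
      ≤ K * ‖v‖ * (Real.exp (K * ∑' k, Fintype.card ι * ‖R (k + N)‖) - 1) := by
  have hlam0 : lam ≠ 0 := by rintro rfl; norm_num at hlam
  set x : ℕ → ι → ℝ := fun k => (lam ^ (k + N))⁻¹ • φ (k + N)
  have hx0 : x 0 = v := by simp [x, hφN, smul_smul, hlam0]
  have hstep : ∀ k, ‖x (k + 1) - (lam⁻¹ • A) *ᵥ x k‖ ≤ Fintype.card ι * ‖R (k + N)‖ * ‖x k‖ :=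
    fun k => by
      simpa only [x, add_right_comm k 1 N] using
        norm_inv_pow_smul_solution_sub_le hlam A R hφ (k + N)
  have hpert := norm_sub_iterate_le_of_perturbation (mulVecLin (lam⁻¹ • A)).toAddMonoidHom
    hK hB (fun k => by positivity) hstep m
  have hfix : ((lam⁻¹ • A) *ᵥ ·)^[m] v = v := Function.iterate_fixed
    (by rw [smul_mulVec, hv, smul_smul, inv_mul_cancel₀ hlam0, one_smul]) m
  change ‖x m - ((lam⁻¹ • A) *ᵥ ·)^[m] (x 0)‖ ≤ _ at hpert
  rw [hx0, hfix] at hpert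
  have hscale : (|lam| ^ (m + N))⁻¹ * ‖φ (m + N) - lam ^ (m + N) • v‖ = ‖x m - v‖ := by
    rw [← abs_pow, ← abs_inv, ← Real.norm_eq_abs, ← norm_smul, smul_sub, smul_smul,
      inv_mul_cancel₀ (pow_ne_zero _ hlam0), one_smul]
  have hpartial : ∑ k ∈ range m, (Fintype.card ι * ‖R (k + N)‖)
      ≤ ∑' k, Fintype.card ι * ‖R (k + N)‖ :=
    Summable.sum_le_tsum _ (fun _ _ => by positivity) (((summable_nat_add_iff N).2 hR).mul_left _)
  rw [hscale]
  refine hpert.trans ?_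
  gcongr

theorem mulVec_upperTriangular_iterate (b q : ℝ) (v : Fin 2 → ℝ) (k : ℕ) :
    (!![1, b; 0, q] *ᵥ ·)^[k] v = ![v 0 + b * (∑ i ∈ range k, q ^ i) * v 1, q ^ k * v 1] := by
  induction k with
  | zero => ext i; fin_cases i <;> simp
  | succ k ih =>
    rw [Function.iterate_succ_apply', ih]
    ext i; fin_cases i <;> simp [sum_range_succ, pow_succ] <;> ring

theorem norm_mulVec_upperTriangular_iterate_le {b q : ℝ} (hq : |q| < 1) (v : Fin 2 → ℝ)
    (k : ℕ) : ‖(!![1, b; 0, q] *ᵥ ·)^[k] v‖ ≤ (1 + |b| * (1 - |q|)⁻¹) * ‖v‖ := by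
  have hgeom : |∑ i ∈ range k, q ^ i| ≤ (1 - |q|)⁻¹ :=
    calc |∑ i ∈ range k, q ^ i| ≤ ∑ i ∈ range k, |q| ^ i := by
          simpa only [abs_pow] using abs_sum_le_sum_abs (fun i => q ^ i) (range k)
      _ ≤ ∑' i, |q| ^ i := Summable.sum_le_tsum _ (fun i _ => by positivity)
          (summable_geometric_of_lt_one (abs_nonneg q) hq)
      _ = (1 - |q|)⁻¹ := tsum_geometric_of_lt_one (abs_nonneg q) hq
  have h0 : |v 0| ≤ ‖v‖ := norm_le_pi_norm v 0
  have h1 : |v 1| ≤ ‖v‖ := norm_le_pi_norm v 1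
  have hK : 0 ≤ |b| * (1 - |q|)⁻¹ := mul_nonneg (abs_nonneg b) (inv_nonneg.2 (by linarith))
  rw [mulVec_upperTriangular_iterate]
  refine pi_norm_le_iff_of_nonneg (by positivity) |>.2 fun i => ?_
  fin_cases i
  · calc |v 0 + b * (∑ i ∈ range k, q ^ i) * v 1|
          ≤ |v 0| + |b| * |∑ i ∈ range k, q ^ i| * |v 1| := by
            rw [← abs_mul, ← abs_mul]; exact abs_add_le _ _
      _ ≤ ‖v‖ + |b| * (1 - |q|)⁻¹ * ‖v‖ := by gcongr
      _ = _ := by ring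
  · calc |q ^ k * v 1| ≤ 1 * ‖v‖ := by
          rw [abs_mul, abs_pow]
          exact mul_le_mul (pow_le_one₀ (abs_nonneg q) hq.le) h1 (abs_nonneg _) zero_le_one
      _ ≤ _ := by gcongr; linarith

theorem exists_norm_iterate_inv_smul_mulVec_le {lam : ℝ} (hlam : 1 < |lam|) (c : ℝ) :
    ∃ K, 0 ≤ K ∧ ∀ k w, ‖((lam⁻¹ • !![lam, c; 0, lam⁻¹]) *ᵥ ·)^[k] w‖ ≤ K * ‖w‖ := by
  have hlam0 : lam ≠ 0 := by rintro rfl; norm_num at hlam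
  have hB : lam⁻¹ • !![lam, c; 0, lam⁻¹] = !![1, lam⁻¹ * c; 0, lam⁻¹ * lam⁻¹] := by
    ext i j; fin_cases i <;> fin_cases j <;> simp [hlam0]
  have hq : |lam⁻¹ * lam⁻¹| < 1 := by
    rw [abs_mul, abs_inv]
    exact mul_lt_one_of_nonneg_of_lt_one_left (by positivity) (inv_lt_one_of_one_lt₀ hlam)
      (inv_le_one_of_one_le₀ hlam.le)
  exact ⟨_, by positivity, fun k w => hB ▸ norm_mulVec_upperTriangular_iterate_le hq w k⟩

theorem stmt13 (lam c : ℝ) (hlam : 1 < |lam|)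
    (R : ℕ → Matrix (Fin 2) (Fin 2) ℝ)
    (hR : Summable fun n : ℕ => ‖R n‖)
    (hdet : ∀ n : ℕ, (!![lam, c; 0, lam⁻¹] + R n).det ≠ 0)
    (ε : ℝ) (hε : 0 < ε) :
    ∃ φ : ℕ → Fin 2 → ℝ,
      (∀ n : ℕ, φ (n + 1) = (!![lam, c; 0, lam⁻¹] + R n).mulVec (φ n)) ∧
      Filter.limsup (fun n : ℕ => (|lam| ^ n)⁻¹ * ‖φ n - ![lam ^ n, 0]‖)
        Filter.atTop ≤ ε := by
  set A : Matrix (Fin 2) (Fin 2) ℝ := !![lam, c; 0, lam⁻¹]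
  set e₁ : Fin 2 → ℝ := ![1, 0]
  obtain ⟨K, hK, hB⟩ := exists_norm_iterate_inv_smul_mulVec_le hlam c
  have hv : A *ᵥ e₁ = lam • e₁ := by ext i; fin_cases i <;> simp [A, e₁]
  have htail : Tendsto
      (fun N => K * ‖e₁‖ * (Real.exp (K * ∑' k, Fintype.card (Fin 2) * ‖R (k + N)‖) - 1))
      atTop (nhds 0) := by
    simpa using ((tendsto_sum_nat_add fun k => Fintype.card (Fin 2) * ‖R k‖).const_mul K
      |>.rexp.sub_const 1 |>.const_mul (K * ‖e₁‖))
  obtain ⟨N, hN⟩ := (htail.eventually_lt_const hε).exists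
  obtain ⟨φ, hφ, hφN⟩ := exists_seq_succ_eq_apply_of_surjective (fun n => (A + R n).mulVec)
    (fun n => mulVec_surjective_iff_isUnit.2 ((A + R n).isUnit_iff_isUnit_det.2 (hdet n).isUnit))
    N (lam ^ N • e₁)
  refine ⟨φ, hφ, limsup_le_of_le (isCoboundedUnder_le_of_le _ fun n => by positivity) ?_⟩
  filter_upwards [eventually_ge_atTop N] with n hn
  obtain ⟨m, rfl⟩ := Nat.exists_eq_add_of_le' hn
  have he₁ : ![lam ^ (m + N), 0] = lam ^ (m + N) • e₁ := by simp [e₁]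
  rw [he₁]
  exact (norm_solution_sub_pow_smul_le hlam.le hv hK hB hR hφ hφN m).trans hN.le
end
end

section
/- Let d ≥ 1, α, θ ∈ ℝ^d, v : ℝ^d → ℝ, E ∈ ℝ, a ∈ {1, −1}, c ∈ ℝ, and let B : ℝ^d → M₂(ℝ) satisfy det B(x) = 1 and B(x+α)⁻¹ · S_E(x) · B(x) = [[a, c], [0, a]] for every x ∈ ℝ^d. Then u(n) := aⁿ · (B(θ + nα))₁₁ defines a solution of the eigenvalue equation u(n+1) + u(n−1) + v(θ+nα)·u(n) = E·u(n) for all n ∈ ℤ (a quasi-periodic solution when a = 1, an anti-quasi-periodic solution when a = −1). -/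
/-!
Conjugating to `!![a, c; 0, a]` means `S_E(x) B(x) = B(x + α) !![a, c; 0, a]`, so the first column
`(p, q)` of `B` is transported by the transfer matrix up to the factor `a`:
`S_E(x) (p x, q x) = a (p (x + α), q (x + α))`. Along the orbit `θ + nα` this is the first-order form of the
eigenvalue equation for `aⁿ p`, and `a² = 1` absorbs the factors `a`.
-/

open Matrix

theorem Matrix.schrodinger_mul_eq_mul_upper_col_zero {K : Type*} [CommRing K]
    {E w a c : K} {P Q : Matrix (Fin 2) (Fin 2) K}
    (h : !![E - w, -1; 1, 0] * Q = P * !![a, c; 0, a]) :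
    (E - w) * Q 0 0 - Q 1 0 = a * P 0 0 ∧ Q 0 0 = a * P 1 0 := by
  have h00 := congrFun₂ h 0 0
  have h10 := congrFun₂ h 1 0
  simp only [mul_apply, Fin.sum_univ_two, of_apply, cons_val', cons_val_zero, cons_val_one,
    empty_val', cons_val_fin_one] at h00 h10
  exact ⟨by linear_combination h00, by linear_combination h10⟩

theorem zpow_sub_one_of_mul_self_eq_one {K : Type*} [DivisionRing K] {a : K} (ha : a * a = 1)
    (n : ℤ) : a ^ (n - 1) = a ^ n * a := by
  have ha0 : a ≠ 0 := left_ne_zero_of_mul_eq_one ha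
  rw [zpow_sub_one₀ ha0, inv_eq_of_mul_eq_one_right ha]

theorem schrodinger_eq_of_transfer {K : Type*} [Field K] {a E : K} (ha : a * a = 1)
    {w p q : ℤ → K} (hp : ∀ n, (E - w n) * p n - q n = a * p (n + 1))
    (hq : ∀ n, p n = a * q (n + 1)) (n : ℤ) :
    a ^ (n + 1) * p (n + 1) + a ^ (n - 1) * p (n - 1) + w n * (a ^ n * p n) =
      E * (a ^ n * p n) := by
  have hq' : p (n - 1) = a * q n := by simpa using hq (n - 1)
  rw [zpow_add_one₀ (left_ne_zero_of_mul_eq_one ha), zpow_sub_one_of_mul_self_eq_one ha, hq']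
  linear_combination (-a ^ n) * hp n + a ^ n * q n * ha

theorem stmt14_general (d : ℕ) (α θ : Fin d → ℝ) (v : (Fin d → ℝ) → ℝ) (E : ℝ)
    (a c : ℝ) (ha : a = 1 ∨ a = -1)
    (B : (Fin d → ℝ) → Matrix (Fin 2) (Fin 2) ℝ)
    (hdetB : ∀ x, (B x).det = 1)
    (hconj : ∀ x : Fin d → ℝ,
      (B (x + α))⁻¹ * !![E - v x, -1; 1, 0] * B x = !![a, c; 0, a]) :
    ∃ u : ℤ → ℝ,
      (∀ n : ℤ, u n = a ^ n * B (θ + (n : ℝ) • α) 0 0) ∧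
      ∀ n : ℤ, u (n + 1) + u (n - 1) + v (θ + (n : ℝ) • α) * u n = E * u n := by
  have hsq : a * a = 1 := by rcases ha with rfl | rfl <;> norm_num
  have hcol (x : Fin d → ℝ) :=
    Matrix.schrodinger_mul_eq_mul_upper_col_zero (P := B (x + α)) (Q := B x) <| by
      rw [← hconj x, Matrix.mul_assoc]
      exact (mul_nonsing_inv_cancel_left _ _ (by simp [hdetB])).symm
  let orbit (n : ℤ) : Fin d → ℝ := θ + (n : ℝ) • α
  have orbit_succ (n : ℤ) : orbit (n + 1) = orbit n + α := by
    simp only [orbit]; push_cast; module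
  refine ⟨_, fun n ↦ rfl, schrodinger_eq_of_transfer hsq (w := fun n ↦ v (orbit n))
    (p := fun n ↦ B (orbit n) 0 0) (q := fun n ↦ B (orbit n) 1 0) (fun n ↦ ?_) (fun n ↦ ?_)⟩
  · simpa only [orbit_succ] using (hcol (orbit n)).1
  · simpa only [orbit_succ] using (hcol (orbit n)).2

theorem stmt14 (d : ℕ) (hd : 1 ≤ d) (α θ : Fin d → ℝ) (v : (Fin d → ℝ) → ℝ) (E : ℝ)
    (a c : ℝ) (ha : a = 1 ∨ a = -1)
    (B : (Fin d → ℝ) → Matrix (Fin 2) (Fin 2) ℝ)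
    (hdetB : ∀ x, (B x).det = 1)
    (hconj : ∀ x : Fin d → ℝ,
      (B (x + α))⁻¹ * !![E - v x, -1; 1, 0] * B x = !![a, c; 0, a]) :
    ∃ u : ℤ → ℝ,
      (∀ n : ℤ, u n = a ^ n * B (θ + (n : ℝ) • α) 0 0) ∧
      ∀ n : ℤ, u (n + 1) + u (n - 1) + v (θ + (n : ℝ) • α) * u n = E * u n :=
  stmt14_general d α θ v E a c ha B hdetB hconj
end

section
/- Let d ≥ 1, α, θ ∈ ℝ^d, v : ℝ^d → ℝ, E ∈ ℝ, a ∈ {1, −1}, c ∈ ℝ with c ≠ 0, and let B : ℝ^d → M₂(ℝ) satisfy det B(x) = 1, sup_x ‖B(x)‖ < ∞, and B(x+α)⁻¹ · S_E(x) · B(x) = [[a, c], [0, a]] for every x ∈ ℝ^d. Let g : ℤ → ℝ satisfy Σ_{n∈ℤ} (1+|n|)·|g(n)| < ∞. Then every solution ũ : ℤ → ℝ of the perturbed eigenvalue equation ũ(n+1) + ũ(n−1) + (v(θ+nα) + g(n))·ũ(n) = E·ũ(n) (for all n ∈ ℤ) that is not identically zero satisfies inf_{n≥0} (ũ(n+1)²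 + ũ(n)²) > 0. In particular ũ is not square-summable, so E is not an eigenvalue of the perturbed operator. -/
/-!
In the frame `B` the transfer matrices of the perturbed operator are `!![a, c; 0, a]` plus a
perturbation of size `O(|g n|)`; after twisting by `a ^ n` they are a transvection `J` plus `r n`
with `∑ (n + 1) ‖r n‖ < ∞`. Since `‖J⁻ᵏ‖` grows only linearly in `k`, a discrete Levinson
(variation of constants) argument yields, on a tail, a solution staying close to the fixed
vector `e₀` of `J`. The transfer matrices have determinant one, so the Wronskian of any solution
with this one is constant: a nonzero solution is either a multiple of it or has a nonzero
Wronskian with it, and in both cases it is bounded away from zero.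
-/

attribute [local instance] Matrix.normedAddCommGroup

noncomputable section

namespace Matrix

variable {n : Type*} [Fintype n] [DecidableEq n]

/-- `M` acting on `n → ℝ` (with the sup norm) by `mulVec`, as a continuous linear map. -/
def toCLM : Matrix n n ℝ ≃ₐ[ℝ] ((n → ℝ) →L[ℝ] (n → ℝ)) :=
  toLinAlgEquiv'.trans (Module.End.toContinuousLinearMap (n → ℝ))

@[simp]
theorem toCLM_apply (M : Matrix n n ℝ) (v : n → ℝ) : toCLM M v = M *ᵥ v := rfl

theorem norm_toCLM_le (M : Matrix n n ℝ) : ‖toCLM M‖ ≤ Fintype.card n * ‖M‖ := by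
  refine ContinuousLinearMap.opNorm_le_bound _ (by positivity) fun v =>
    (pi_norm_le_iff_of_nonneg (by positivity)).2 fun i => ?_
  calc ‖(M *ᵥ v) i‖ ≤ ∑ j, ‖M i j‖ * ‖v j‖ := norm_sum_le_of_le _ fun j _ => norm_mul_le _ _
    _ ≤ ∑ _j : n, ‖M‖ * ‖v‖ := by
      gcongr with j
      exacts [norm_entry_le_entrywise_sup_norm M, norm_le_pi_norm v j]
    _ = Fintype.card n * ‖M‖ * ‖v‖ := by rw [Finset.sum_const, nsmul_eq_mul, mul_assoc]; rfl

theorem norm_transvection_le (i j : n) (c : ℝ) : ‖transvection i j c‖ ≤ 1 + ‖c‖ :=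
  (norm_le_iff (by positivity)).2 fun k l => by
    simp only [transvection, add_apply, one_apply, single_apply, Real.norm_eq_abs]
    split_ifs <;> norm_num <;> linarith [abs_add_le 1 c, abs_one (α := ℝ), abs_nonneg c]

theorem transvection_pow {R : Type*} [CommRing R] {i j : n} (h : i ≠ j) (c : R) (k : ℕ) :
    transvection i j c ^ k = transvection i j (k * c) := by
  induction k with
  | zero => simp
  | succ k ih =>
    rw [pow_succ, ih, transvection_mul_transvection_same i j h]
    push_cast
    ring_nf

theorem norm_toCLM_transvection_pow_le (i j : n) (h : i ≠ j) (c : ℝ) (k : ℕ) :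
    ‖toCLM (transvection i j c) ^ k‖ ≤ Fintype.card n * (1 + k * ‖c‖) := by
  rw [← map_pow, transvection_pow h]
  refine (norm_toCLM_le _).trans (mul_le_mul_of_nonneg_left ?_ (by positivity))
  simpa [norm_mul] using norm_transvection_le i j (k * c)

theorem norm_inv_le_of_det_eq_one {A : Matrix (Fin 2) (Fin 2) ℝ} (h : A.det = 1) :
    ‖A⁻¹‖ ≤ ‖A‖ := by
  rw [inv_def, h, Ring.inverse_one, one_smul, adjugate_fin_two]
  refine (norm_le_iff (norm_nonneg _)).2 fun i j => ?_
  fin_cases i <;> fin_cases j <;>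
    simpa [← Real.norm_eq_abs] using norm_entry_le_entrywise_sup_norm A

theorem mulVec_ne_zero {K : Type*} [Field K] {M : Matrix n n K} (hM : M.det ≠ 0) {v : n → K}
    (hv : v ≠ 0) : M *ᵥ v ≠ 0 :=
  fun h => hM (exists_mulVec_eq_zero_iff.1 ⟨v, hv, h⟩)

theorem inv_mulVec_mulVec_eq {R : Type*} [CommRing R] {B₀ : Matrix n n R} (hB₀ : IsUnit B₀.det)
    (B₁ A : Matrix n n R) (u : n → R) :
    B₁⁻¹ *ᵥ (A *ᵥ u) = (B₁⁻¹ * A * B₀) *ᵥ (B₀⁻¹ *ᵥ u) := by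
  rw [mulVec_mulVec, mulVec_mulVec, mul_assoc (B₁⁻¹ * A), mul_nonsing_inv _ hB₀, mul_one]

theorem smul_parabolic_eq_transvection {R : Type*} [CommRing R] {a : R} (ha : a * a = 1)
    (c : R) :
    a • !![a, c; 0, a] = transvection (0 : Fin 2) 1 (a * c) := by
  ext i j
  fin_cases i <;> fin_cases j <;> simp [transvection, ha]

theorem norm_toCLM_conj_le {B₀ B₁ : Matrix (Fin 2) (Fin 2) ℝ} (h₁ : B₁.det = 1) {C : ℝ}
    (hB₀ : ‖B₀‖ ≤ C) (hB₁ : ‖B₁‖ ≤ C) (D : Matrix (Fin 2) (Fin 2) ℝ) :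
    ‖toCLM (B₁⁻¹ * D * B₀)‖ ≤ 8 * C ^ 2 * ‖D‖ := by
  have h (A : Matrix (Fin 2) (Fin 2) ℝ) : ‖toCLM A‖ ≤ 2 * ‖A‖ := by
    simpa using norm_toCLM_le A
  have hC : 0 ≤ 2 * C := by linarith [norm_nonneg B₀]
  have hinv : ‖toCLM B₁⁻¹‖ ≤ 2 * C := (h _).trans (by linarith [norm_inv_le_of_det_eq_one h₁])
  rw [map_mul, map_mul]
  calc ‖toCLM B₁⁻¹ * toCLM D * toCLM B₀‖ ≤ ‖toCLM B₁⁻¹‖ * ‖toCLM D‖ * ‖toCLM B₀‖ :=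
        (norm_mul_le _ _).trans (mul_le_mul_of_nonneg_right (norm_mul_le _ _) (norm_nonneg _))
    _ ≤ (2 * C) * (2 * ‖D‖) * (2 * C) :=
      mul_le_mul (mul_le_mul hinv (h D) (norm_nonneg _) hC) ((h B₀).trans (by linarith))
        (norm_nonneg _) (by positivity)
    _ = 8 * C ^ 2 * ‖D‖ := by ring

end Matrix

section Levinson

open BoundedContinuousFunction

variable {𝕜 E : Type*} [NontriviallyNormedField 𝕜] [NormedAddCommGroup E] [NormedSpace 𝕜 E]
  (Jinv : E →L[𝕜] E) (r : ℕ → E →L[𝕜] E)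

/-- The variation-of-constants sum `∑_{k ≥ n} J^{n-k-1} r_k W_k`, with `Jinv` playing `J⁻¹`. -/
def volterraSum (W : ℕ → E) (n : ℕ) : E :=
  ∑' m, (Jinv ^ (m + 1)) (r (n + m) (W (n + m)))

variable {Jinv r} {K C : ℝ} {W : ℕ → E}

theorem norm_volterraSum_le (hsum : ∀ n, Summable fun m => ‖Jinv ^ (m + 1)‖ * ‖r (n + m)‖)
    (hK : ∀ n, ∑' m, ‖Jinv ^ (m + 1)‖ * ‖r (n + m)‖ ≤ K) (hW : ∀ k, ‖W k‖ ≤ C) (n : ℕ) :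
    ‖volterraSum Jinv r W n‖ ≤ K * C := by
  have hC : 0 ≤ C := (norm_nonneg _).trans (hW 0)
  refine (tsum_of_norm_bounded ((hsum n).mul_right C).hasSum fun m => ?_).trans ?_
  · exact ((Jinv ^ (m + 1)).le_opNorm_of_le ((r (n + m)).le_opNorm_of_le (hW _))).trans_eq
      (by ring)
  · rw [tsum_mul_right]
    exact mul_le_mul_of_nonneg_right (hK n) hC

variable [CompleteSpace E]

theorem summable_volterra (hsum : ∀ n, Summable fun m => ‖Jinv ^ (m + 1)‖ * ‖r (n + m)‖)
    (hW : ∀ k, ‖W k‖ ≤ C) (n : ℕ) :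
    Summable fun m => (Jinv ^ (m + 1)) (r (n + m) (W (n + m))) :=
  ((hsum n).mul_right C).of_norm_bounded fun m =>
    ((Jinv ^ (m + 1)).le_opNorm_of_le ((r (n + m)).le_opNorm_of_le (hW _))).trans_eq (by ring)

theorem volterraSum_sub (hsum : ∀ n, Summable fun m => ‖Jinv ^ (m + 1)‖ * ‖r (n + m)‖)
    {W' : ℕ → E} {C' : ℝ} (hW : ∀ k, ‖W k‖ ≤ C) (hW' : ∀ k, ‖W' k‖ ≤ C') (n : ℕ) :
    volterraSum Jinv r W n - volterraSum Jinv r W' n = volterraSum Jinv r (W - W') n := by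
  rw [volterraSum, volterraSum, ← (summable_volterra hsum hW n).tsum_sub
    (summable_volterra hsum hW' n)]
  simp only [volterraSum, Pi.sub_apply, map_sub]

theorem map_volterraSum {J : E →L[𝕜] E} (hJ : J * Jinv = 1)
    (hsum : ∀ n, Summable fun m => ‖Jinv ^ (m + 1)‖ * ‖r (n + m)‖) (hW : ∀ k, ‖W k‖ ≤ C)
    (n : ℕ) : J (volterraSum Jinv r W n) = r n (W n) + volterraSum Jinv r W (n + 1) := by
  have hJpow (m : ℕ) (x : E) : J ((Jinv ^ (m + 1)) x) = (Jinv ^ m) x := by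
    rw [← mul_apply_eq_comp, pow_succ', ← mul_assoc, hJ, one_mul]
  have hshift (m : ℕ) : n + (m + 1) = n + 1 + m := by omega
  rw [volterraSum, J.map_tsum (summable_volterra hsum hW n)]
  simp only [hJpow]
  rw [tsum_eq_zero_add', pow_zero, one_apply_eq_self, add_zero, volterraSum]
  · exact congrArg _ (tsum_congr fun m => by simp only [hshift m])
  · exact (summable_volterra hsum hW (n + 1)).congr fun m => by simp only [hshift m]

/-- Discrete Levinson theorem: the solution is the fixed point of the contraction
`W ↦ w₀ - volterraSum W` on bounded sequences. -/
theorem exists_solution_norm_sub_le_s16 {J : E →L[𝕜] E} (hJ : J * Jinv = 1) {w₀ : E}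
    (hw₀ : J w₀ = w₀) (hK1 : K < 1)
    (hsum : ∀ n, Summable fun m => ‖Jinv ^ (m + 1)‖ * ‖r (n + m)‖)
    (hK : ∀ n, ∑' m, ‖Jinv ^ (m + 1)‖ * ‖r (n + m)‖ ≤ K) :
    ∃ W : ℕ → E, (∀ n, W (n + 1) = J (W n) + r n (W n)) ∧
      ∀ n, ‖W n - w₀‖ ≤ K / (1 - K) * ‖w₀‖ := by
  have hK0 : 0 ≤ K := (tsum_nonneg fun m => by positivity).trans (hK 0)
  let T : (ℕ →ᵇ E) → (ℕ →ᵇ E) := fun W =>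
    ofNormedAddCommGroupDiscrete (fun n => w₀ - volterraSum Jinv r W n) (‖w₀‖ + K * ‖W‖)
      fun n => (norm_sub_le _ _).trans
        (add_le_add_right (norm_volterraSum_le hsum hK W.norm_coe_le_norm n) _)
  have hT : ContractingWith ⟨K, hK0⟩ T := by
    refine ⟨hK1, LipschitzWith.of_dist_le_mul fun W W' => (dist_le (by positivity)).2 fun n => ?_⟩
    have hD (k : ℕ) : ‖(⇑W' - ⇑W) k‖ ≤ ‖W - W'‖ := by
      rw [← coe_sub, norm_sub_rev W W']
      exact (W' - W).norm_coe_le_norm k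
    simp only [T, coe_ofNormedAddCommGroupDiscrete, dist_eq_norm, sub_sub_sub_cancel_left,
      volterraSum_sub hsum W'.norm_coe_le_norm W.norm_coe_le_norm]
    exact norm_volterraSum_le hsum hK hD n
  set Z := ContractingWith.fixedPoint T hT
  have hZ (n : ℕ) : Z n = w₀ - volterraSum Jinv r Z n :=
    (congrArg (fun W : ℕ →ᵇ E => W n) (ContractingWith.fixedPoint_isFixedPt hT)).symm
  refine ⟨Z, fun n => ?_, fun n => ?_⟩
  · have hJZ := congrArg J (hZ n)
    rw [map_sub, hw₀, map_volterraSum hJ hsum Z.norm_coe_le_norm] at hJZ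
    rw [hZ (n + 1), hJZ]
    abel
  · set w := const ℕ w₀
    have hw : dist w (T w) ≤ K * ‖w₀‖ := (dist_le (by positivity)).2 fun k => by
      simpa [T, w, dist_eq_norm] using
        norm_volterraSum_le hsum hK (fun _ => le_rfl) k
    calc ‖Z n - w₀‖ = dist (Z n) (w n) := (dist_eq_norm _ _).symm
      _ ≤ dist w Z := (dist_coe_le_dist n).trans_eq (dist_comm _ _)
      _ ≤ dist w (T w) / (1 - K) := hT.dist_fixedPoint_le w
      _ ≤ K * ‖w₀‖ / (1 - K) := by gcongr
      _ = K / (1 - K) * ‖w₀‖ := by ring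

end Levinson

section Wronskian

open Matrix

def wronskian {R : Type*} [CommRing R] (v w : Fin 2 → R) : R := v 0 * w 1 - v 1 * w 0

theorem wronskian_mulVec {R : Type*} [CommRing R] (M : Matrix (Fin 2) (Fin 2) R)
    (v w : Fin 2 → R) : wronskian (M *ᵥ v) (M *ᵥ w) = M.det * wronskian v w := by
  simp only [wronskian, mulVec, dotProduct, Fin.sum_univ_two, det_fin_two]
  ring

theorem exists_eq_smul_of_wronskian_eq_zero {K : Type*} [Field K] {v w : Fin 2 → K}
    (hw : w ≠ 0) (h : wronskian v w = 0) : ∃ c : K, v = c • w := by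
  rw [wronskian, sub_eq_zero] at h
  by_cases h0 : w 0 = 0
  · have h1 : w 1 ≠ 0 := fun h1 => hw (funext fun i => by fin_cases i <;> assumption)
    refine ⟨v 1 / w 1, funext fun i => ?_⟩
    fin_cases i
    · simpa [h0, h1] using h
    · simp [h1]
  · refine ⟨v 0 / w 0, funext fun i => ?_⟩
    fin_cases i
    · simp [h0]
    · show v 1 = v 0 / w 0 * w 1
      field_simp
      linear_combination h.symm

theorem abs_wronskian_le (v w : Fin 2 → ℝ) : |wronskian v w| ≤ 2 * ‖v‖ * ‖w‖ := by
  have hv (i : Fin 2) : |v i| ≤ ‖v‖ := norm_le_pi_norm v i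
  have hw (i : Fin 2) : |w i| ≤ ‖w‖ := norm_le_pi_norm w i
  calc |wronskian v w| ≤ |v 0| * |w 1| + |v 1| * |w 0| := by
        simpa only [wronskian, abs_mul] using abs_sub (v 0 * w 1) (v 1 * w 0)
    _ ≤ ‖v‖ * ‖w‖ + ‖v‖ * ‖w‖ := by gcongr <;> first | exact hv _ | exact hw _
    _ = 2 * ‖v‖ * ‖w‖ := by ring

/-- A nonzero solution is either a multiple of `Z`, or its Wronskian with `Z` is a nonzero
constant. -/
theorem exists_pos_le_norm_of_wronskian {M : ℕ → Matrix (Fin 2) (Fin 2) ℝ}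
    (hdet : ∀ n, (M n).det = 1) {Y Z : ℕ → Fin 2 → ℝ} (hY : ∀ n, Y (n + 1) = M n *ᵥ Y n)
    (hZ : ∀ n, Z (n + 1) = M n *ᵥ Z n) {c C : ℝ} (hc : 0 < c) (hZc : ∀ n, c ≤ ‖Z n‖)
    (hZC : ∀ n, ‖Z n‖ ≤ C) (hY0 : Y 0 ≠ 0) : ∃ δ > 0, ∀ n, δ ≤ ‖Y n‖ := by
  have hZ0 : Z 0 ≠ 0 := norm_pos_iff.1 (hc.trans_le (hZc 0))
  by_cases hw : wronskian (Y 0) (Z 0) = 0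
  · obtain ⟨a, ha⟩ := exists_eq_smul_of_wronskian_eq_zero hZ0 hw
    have ha0 : a ≠ 0 := by rintro rfl; exact hY0 (by simpa using ha)
    have hYZ (n : ℕ) : Y n = a • Z n := by
      induction n with
      | zero => exact ha
      | succ n ih => rw [hY, hZ, ih, mulVec_smul]
    refine ⟨|a| * c, by positivity, fun n => ?_⟩
    rw [hYZ, norm_smul, Real.norm_eq_abs]
    exact mul_le_mul_of_nonneg_left (hZc n) (abs_nonneg a)
  · have hconst (n : ℕ) : wronskian (Y n) (Z n) = wronskian (Y 0) (Z 0) := by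
      induction n with
      | zero => rfl
      | succ n ih => rw [hY, hZ, wronskian_mulVec, hdet, one_mul, ih]
    have hC : 0 < C := hc.trans_le ((hZc 0).trans (hZC 0))
    refine ⟨|wronskian (Y 0) (Z 0)| / (2 * C), by positivity, fun n => ?_⟩
    rw [div_le_iff₀ (by positivity), ← hconst n]
    calc |wronskian (Y n) (Z n)| ≤ 2 * ‖Y n‖ * ‖Z n‖ := abs_wronskian_le _ _
      _ ≤ ‖Y n‖ * (2 * C) := by nlinarith [hZC n, norm_nonneg (Y n)]

end Wronskian

theorem exists_pos_forall_le_of_forall_le_add {f : ℕ → ℝ} (hf : ∀ n, 0 < f n) {N : ℕ}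
    (h : ∃ δ > 0, ∀ n, δ ≤ f (n + N)) : ∃ δ > 0, ∀ n, δ ≤ f n := by
  induction N with
  | zero => simpa using h
  | succ N ih =>
    obtain ⟨δ, hδ, hle⟩ := h
    refine ih ⟨min δ (f N), lt_min hδ (hf N), fun n => ?_⟩
    cases n with
    | zero => simp
    | succ n => exact (min_le_left _ _).trans (by rw [Nat.add_right_comm]; exact hle n)

section Parabolic

open Matrix

theorem exists_forall_tsum_le_of_summable {φ : ℕ → ℝ} (hφ : Summable φ) (h0 : ∀ n, 0 ≤ φ n)
    {ε : ℝ} (hε : 0 < ε) : ∃ N, ∀ n, ∑' m, φ (n + m + N) ≤ ε := by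
  obtain ⟨N, hN⟩ := ((tendsto_sum_nat_add φ).eventually (ge_mem_nhds hε)).exists
  refine ⟨N, fun n => le_trans ?_ hN⟩
  exact tsum_comp_le_tsum_of_inj ((summable_nat_add_iff N).2 hφ) (fun _ => h0 _)
    (add_right_injective n)

theorem exists_solution_near_single (t : ℝ) {M : ℕ → Matrix (Fin 2) (Fin 2) ℝ} {ρ : ℕ → ℝ}
    (hρ : ∀ n, ‖toCLM (M n - transvection (0 : Fin 2) 1 t)‖ ≤ ρ n)
    (hsum : Summable fun n : ℕ => ((n : ℝ) + 1) * ρ n) :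
    ∃ N, ∃ Z : ℕ → Fin 2 → ℝ, (∀ n, Z (n + 1) = M (n + N) *ᵥ Z n) ∧
      ∀ n, ‖Z n - Pi.single 0 1‖ ≤ 1 / 3 := by
  set J := transvection (0 : Fin 2) 1 t
  set Jinv := toCLM (transvection (0 : Fin 2) 1 (-t))
  have hρ0 (n : ℕ) : 0 ≤ ρ n := (norm_nonneg _).trans (hρ n)
  obtain ⟨N, hN⟩ := exists_forall_tsum_le_of_summable hsum (fun n => by positivity [hρ0 n])
    (ε := 1 / (8 * (1 + |t|))) (by positivity)
  set r : ℕ → (Fin 2 → ℝ) →L[ℝ] (Fin 2 → ℝ) := fun n => toCLM (M (n + N) - J)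
  set φ : ℕ → ℝ := fun n => ((n : ℝ) + 1) * ρ n
  -- `‖J⁻¹ ^ (m + 1)‖` grows linearly in `m`, which the weight `n + 1` in `hsum` absorbs.
  have hterm (n m : ℕ) : ‖Jinv ^ (m + 1)‖ * ‖r (n + m)‖ ≤ 2 * (1 + |t|) * φ (n + m + N) := by
    have hpow := norm_toCLM_transvection_pow_le (0 : Fin 2) 1 (by decide) (-t) (m + 1)
    have hlin :
        2 * (1 + ((m + 1 : ℕ) : ℝ) * ‖-t‖) ≤ 2 * (1 + |t|) * (((n + m + N : ℕ) : ℝ) + 1) := by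
      push_cast
      rw [norm_neg, Real.norm_eq_abs]
      nlinarith [abs_nonneg t, (n.cast_nonneg : (0 : ℝ) ≤ n), (N.cast_nonneg : (0 : ℝ) ≤ N)]
    rw [Fintype.card_fin, Nat.cast_ofNat] at hpow
    exact (mul_le_mul (hpow.trans hlin) (hρ _) (norm_nonneg _) (by positivity)).trans_eq
      (mul_assoc _ _ _)
  have hφ (n : ℕ) : Summable fun m => φ (n + m + N) :=
    ((summable_nat_add_iff n).2 ((summable_nat_add_iff N).2 hsum)).congr fun m => by
      simp only [Nat.add_comm m n]
  have hsum' (n : ℕ) : Summable fun m => ‖Jinv ^ (m + 1)‖ * ‖r (n + m)‖ :=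
    ((hφ n).mul_left _).of_nonneg_of_le (fun _ => by positivity) (hterm n)
  have hK (n : ℕ) : ∑' m, ‖Jinv ^ (m + 1)‖ * ‖r (n + m)‖ ≤ 1 / 4 :=
    calc ∑' m, ‖Jinv ^ (m + 1)‖ * ‖r (n + m)‖ ≤ ∑' m, 2 * (1 + |t|) * φ (n + m + N) :=
          (hsum' n).tsum_le_tsum (hterm n) ((hφ n).mul_left _)
      _ ≤ 2 * (1 + |t|) * (1 / (8 * (1 + |t|))) := by rw [tsum_mul_left]; gcongr; exact hN n
      _ = 1 / 4 := by field_simp; ring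
  have hJ : toCLM J * Jinv = 1 := by
    rw [← map_mul, transvection_mul_transvection_same _ _ (by decide), add_neg_cancel,
      transvection_zero, map_one]
  have hw₀ : toCLM J (Pi.single 0 1) = Pi.single 0 1 := by
    ext i
    fin_cases i <;> simp [J, transvection]
  obtain ⟨Z, hZ, hZnear⟩ := exists_solution_norm_sub_le_s16 hJ hw₀ (by norm_num) hsum' hK
  refine ⟨N, Z, fun n => ?_, fun n => ?_⟩
  · rw [hZ, toCLM_apply, toCLM_apply, ← add_mulVec, add_sub_cancel]
  · refine (hZnear n).trans_eq ?_
    rw [Pi.norm_single, norm_one]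
    norm_num

theorem exists_pos_le_norm_of_perturb_transvection (t : ℝ) {M : ℕ → Matrix (Fin 2) (Fin 2) ℝ}
    {ρ : ℕ → ℝ} (hdet : ∀ n, (M n).det = 1)
    (hρ : ∀ n, ‖toCLM (M n - transvection (0 : Fin 2) 1 t)‖ ≤ ρ n)
    (hsum : Summable fun n : ℕ => ((n : ℝ) + 1) * ρ n) {W : ℕ → Fin 2 → ℝ}
    (hW : ∀ n, W (n + 1) = M n *ᵥ W n) (hW0 : W 0 ≠ 0) : ∃ δ > 0, ∀ n, δ ≤ ‖W n‖ := by
  obtain ⟨N, Z, hZ, hZnear⟩ := exists_solution_near_single t hρ hsum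
  have hWne (n : ℕ) : W n ≠ 0 := by
    induction n with
    | zero => exact hW0
    | succ n ih => rw [hW]; exact mulVec_ne_zero (by rw [hdet]; exact one_ne_zero) ih
  have he₀ : ‖(Pi.single 0 1 : Fin 2 → ℝ)‖ = 1 := by rw [Pi.norm_single, norm_one]
  refine exists_pos_forall_le_of_forall_le_add (fun n => norm_pos_iff.2 (hWne n)) (N := N) ?_
  refine exists_pos_le_norm_of_wronskian (fun n => hdet (n + N)) (Y := fun n => W (n + N))
    (fun n => ?_) hZ (c := 2 / 3) (C := 4 / 3) (by norm_num) (fun n => ?_) (fun n => ?_)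
    (by simpa using hWne N)
  · rw [Nat.add_right_comm]
    exact hW _
  · linarith [norm_sub_norm_le (Pi.single 0 1 : Fin 2 → ℝ) (Z n),
      norm_sub_rev (Z n) (Pi.single 0 1), hZnear n, he₀]
  · linarith [norm_le_norm_add_norm_sub' (Z n) (Pi.single 0 1 : Fin 2 → ℝ), hZnear n, he₀]

end Parabolic

section Cocycle

open Matrix

/-- Conjugating by `B` and twisting by `a ^ n` turns the recurrence into a summable perturbation
of the transvection `a • !![a, c; 0, a]`. -/
theorem exists_pos_le_norm_of_conj {B S D : ℕ → Matrix (Fin 2) (Fin 2) ℝ} {a c Cb : ℝ}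
    (ha : a * a = 1) (hdetB : ∀ n, (B n).det = 1) (hB : ∀ n, ‖B n‖ ≤ Cb)
    (hconj : ∀ n, (B (n + 1))⁻¹ * S n * B n = !![a, c; 0, a])
    (hdet : ∀ n, (S n + D n).det = 1) (hD : Summable fun n : ℕ => ((n : ℝ) + 1) * ‖D n‖)
    {U : ℕ → Fin 2 → ℝ} (hU : ∀ n, U (n + 1) = (S n + D n) *ᵥ U n) (hU0 : U 0 ≠ 0) :
    ∃ δ > 0, ∀ n, δ ≤ ‖U n‖ := by
  have hunit (n : ℕ) : IsUnit (B n).det := by rw [hdetB]; exact isUnit_one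
  have hnorm_a : ‖a‖ = 1 := by rcases mul_self_eq_one_iff.1 ha with rfl | rfl <;> norm_num
  set M : ℕ → Matrix (Fin 2) (Fin 2) ℝ := fun n => a • ((B (n + 1))⁻¹ * (S n + D n) * B n)
  set V : ℕ → Fin 2 → ℝ := fun n => a ^ n • ((B n)⁻¹ *ᵥ U n)
  have hV (n : ℕ) : V (n + 1) = M n *ᵥ V n := by
    simp only [V, M, hU, inv_mulVec_mulVec_eq (hunit n), smul_mulVec, mulVec_smul, smul_smul,
      pow_succ]
  have hMdet (n : ℕ) : (M n).det = 1 := by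
    simp [M, det_mul, hdet, hdetB, det_nonsing_inv, sq, ha]
  have hMJ (n : ℕ) : M n - transvection 0 1 (a * c) = a • ((B (n + 1))⁻¹ * D n * B n) := by
    rw [← smul_parabolic_eq_transvection ha, ← hconj n]
    simp only [M, mul_add, add_mul, smul_add, add_sub_cancel_left]
  have hρ (n : ℕ) : ‖toCLM (M n - transvection (0 : Fin 2) 1 (a * c))‖ ≤ 8 * Cb ^ 2 * ‖D n‖ := by
    rw [hMJ, map_smul, norm_smul, hnorm_a, one_mul]
    exact norm_toCLM_conj_le (hdetB _) (hB _) (hB _) _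
  have hV0 : V 0 ≠ 0 := by
    simpa [V] using mulVec_ne_zero (by simp [det_nonsing_inv, hdetB]) hU0
  obtain ⟨δ, hδ, hle⟩ := exists_pos_le_norm_of_perturb_transvection (a * c) hMdet hρ
    ((hD.mul_left (8 * Cb ^ 2)).congr fun n => by ring) hV hV0
  have hVU (n : ℕ) : ‖V n‖ ≤ 2 * Cb * ‖U n‖ := by
    rw [norm_smul, norm_pow, hnorm_a, one_pow, one_mul, ← toCLM_apply]
    refine ((toCLM _).le_opNorm _).trans (mul_le_mul_of_nonneg_right ?_ (norm_nonneg (U n)))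
    refine (norm_toCLM_le _).trans ?_
    simp only [Fintype.card_fin, Nat.cast_ofNat]
    linarith [norm_inv_le_of_det_eq_one (hdetB n), hB n]
  have hCb : 0 < Cb := by
    nlinarith [hle 0, hVU 0, norm_pos_iff.2 hU0]
  exact ⟨δ / (2 * Cb), by positivity, fun n => by
    rw [div_le_iff₀ (by positivity)]; nlinarith [hle n, hVU n]⟩

end Cocycle

section Schrodinger

open Matrix Filter Topology

variable {u : ℤ → ℝ} {E : ℝ}

theorem eq_zero_of_three_term {w : ℤ → ℝ}
    (hu : ∀ n, u (n + 1) + u (n - 1) + w n * u n = E * u n) (h0 : u 0 = 0) (h1 : u 1 = 0) :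
    u = 0 := by
  have key (n : ℤ) : u n = 0 ∧ u (n + 1) = 0 := by
    induction n using Int.induction_on with
    | zero => exact ⟨h0, h1⟩
    | succ n ih =>
      refine ⟨ih.2, ?_⟩
      have h := hu (n + 1)
      rw [add_sub_cancel_right, ih.1, ih.2] at h
      linarith
    | pred n ih =>
      refine ⟨?_, by rw [sub_add_cancel]; exact ih.1⟩
      have h := hu (-n)
      rw [ih.1, ih.2] at h
      linarith
  exact funext fun n => (key n).1

theorem vec_succ_eq_mulVec {p q : ℝ} {n : ℤ}
    (h : u (n + 1) + u (n - 1) + (p + q) * u n = E * u n) :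
    ![u (n + 1), u n] = (!![E - p, -1; 1, 0] + !![-q, 0; 0, 0]) *ᵥ ![u n, u (n - 1)] := by
  ext i
  fin_cases i <;> simp [mulVec, dotProduct, Fin.sum_univ_two]
  linarith

theorem summable_succ_mul_abs {g : ℤ → ℝ}
    (hg : Summable fun n : ℤ => (1 + |(n : ℝ)|) * |g n|) :
    Summable fun m : ℕ => ((m : ℝ) + 1) * |g (m + 1)| := by
  have hinj : Function.Injective fun m : ℕ => (m : ℤ) + 1 := fun m m' h => by simpa using h
  refine (hg.comp_injective hinj).of_nonneg_of_le (fun _ => by positivity) fun m => ?_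
  refine mul_le_mul_of_nonneg_right ?_ (abs_nonneg _)
  push_cast
  rw [abs_of_nonneg (by positivity)]
  linarith

theorem norm_vec2_sq_le (x y : ℝ) : ‖![x, y]‖ ^ 2 ≤ x ^ 2 + y ^ 2 := by
  have h : ‖![x, y]‖ ≤ √(x ^ 2 + y ^ 2) :=
    (pi_norm_le_iff_of_nonneg (Real.sqrt_nonneg _)).2 fun i => Real.abs_le_sqrt <| by
      fin_cases i <;> simp [sq_nonneg]
  exact (pow_le_pow_left₀ (norm_nonneg _) h 2).trans (Real.sq_sqrt (by positivity)).le

theorem not_summable_of_le_add {f : ℤ → ℝ} {δ : ℝ} (hδ : 0 < δ)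
    (h : ∀ n : ℤ, 0 ≤ n → δ ≤ f (n + 1) + f n) : ¬ Summable f := by
  intro hf
  have hlim : Tendsto f cofinite (𝓝 0) := hf.tendsto_cofinite_zero
  have hcast (k : ℤ) : Tendsto (fun n : ℕ => (n : ℤ) + k) atTop cofinite := by
    rw [← Nat.cofinite_eq_atTop]
    exact Function.Injective.tendsto_cofinite fun m m' hm => by simpa using hm
  have hsum := (hlim.comp (hcast 1)).add (hlim.comp (hcast 0))
  rw [add_zero] at hsum
  exact hδ.not_ge (ge_of_tendsto' hsum fun n => by simpa using h n n.cast_nonneg)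

end Schrodinger

theorem stmt16_general (d : ℕ) (α θ : Fin d → ℝ) (v : (Fin d → ℝ) → ℝ) (E : ℝ)
    (a c : ℝ) (ha : a = 1 ∨ a = -1)
    (B : (Fin d → ℝ) → Matrix (Fin 2) (Fin 2) ℝ)
    (hdetB : ∀ x, (B x).det = 1)
    (hBbd : ∃ Cb : ℝ, ∀ x, ‖B x‖ ≤ Cb)
    (hconj : ∀ x : Fin d → ℝ,
      (B (x + α))⁻¹ * !![E - v x, -1; 1, 0] * B x = !![a, c; 0, a])
    (g : ℤ → ℝ) (hg : Summable fun n : ℤ => (1 + |(n : ℝ)|) * |g n|)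
    (u : ℤ → ℝ)
    (hu : ∀ n : ℤ, u (n + 1) + u (n - 1) + (v (θ + (n : ℝ) • α) + g n) * u n = E * u n)
    (hne : u ≠ 0) :
    (∃ δ > 0, ∀ n : ℤ, 0 ≤ n → δ ≤ u (n + 1) ^ 2 + u n ^ 2) ∧
      ¬ Summable (fun n : ℤ => u n ^ 2) := by
  obtain ⟨Cb, hCb⟩ := hBbd
  have ha' : a * a = 1 := by rcases ha with rfl | rfl <;> norm_num
  -- `U m = ![u (m + 1), u m]`, so step `m` of the cocycle is taken at `θ + (m + 1) • α`.
  set x : ℕ → Fin d → ℝ := fun m => θ + (((m : ℤ) + 1 : ℤ) : ℝ) • α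
  have hx (m : ℕ) : x (m + 1) = x m + α := by
    simp only [x]
    push_cast
    rw [add_smul, one_smul, add_assoc]
  obtain ⟨δ, hδ, hle⟩ := exists_pos_le_norm_of_conj (B := fun m => B (x m))
    (S := fun m => !![E - v (x m), -1; 1, 0]) (D := fun m => !![-g (m + 1), 0; 0, 0])
    (U := fun m => ![u (m + 1), u m]) ha' (fun _ => hdetB _) (fun _ => hCb _)
    (fun m => by simp only [hx]; exact hconj _)
    (fun m => by simp [Matrix.det_fin_two])
    ((summable_succ_mul_abs hg).of_nonneg_of_le (fun _ => by positivity) fun m =>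
      mul_le_mul_of_nonneg_left ((Matrix.norm_le_iff (abs_nonneg _)).2 fun i j => by
        fin_cases i <;> fin_cases j <;> simp) (by positivity))
    (fun m => by simpa [x] using vec_succ_eq_mulVec (hu (m + 1)))
    (fun h => hne (eq_zero_of_three_term hu (by simpa using congrFun h 1)
      (by simpa using congrFun h 0)))
  have hlow (n : ℤ) (hn : 0 ≤ n) : δ ^ 2 ≤ u (n + 1) ^ 2 + u n ^ 2 := by
    lift n to ℕ using hn
    exact (pow_le_pow_left₀ hδ.le (hle n) 2).trans (norm_vec2_sq_le _ _)
  exact ⟨⟨δ ^ 2, by positivity, hlow⟩, not_summable_of_le_add (by positivity) hlow⟩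

theorem stmt16 (d : ℕ) (hd : 1 ≤ d) (α θ : Fin d → ℝ) (v : (Fin d → ℝ) → ℝ) (E : ℝ)
    (a c : ℝ) (ha : a = 1 ∨ a = -1) (hc : c ≠ 0)
    (B : (Fin d → ℝ) → Matrix (Fin 2) (Fin 2) ℝ)
    (hdetB : ∀ x, (B x).det = 1)
    (hBbd : ∃ Cb : ℝ, ∀ x, ‖B x‖ ≤ Cb)
    (hconj : ∀ x : Fin d → ℝ,
      (B (x + α))⁻¹ * !![E - v x, -1; 1, 0] * B x = !![a, c; 0, a])
    (g : ℤ → ℝ) (hg : Summable fun n : ℤ => (1 + |(n : ℝ)|) * |g n|)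
    (u : ℤ → ℝ)
    (hu : ∀ n : ℤ, u (n + 1) + u (n - 1) + (v (θ + (n : ℝ) • α) + g n) * u n = E * u n)
    (hne : u ≠ 0) :
    (∃ δ > 0, ∀ n : ℤ, 0 ≤ n → δ ≤ u (n + 1) ^ 2 + u n ^ 2) ∧
      ¬ Summable (fun n : ℤ => u n ^ 2) :=
  stmt16_general d α θ v E a c ha B hdetB hBbd hconj g hg u hu hne
end
end

section
/- Let d ≥ 1, α, θ ∈ ℝ^d, v : ℝ^d → ℝ, E ∈ ℝ, λ ∈ ℝ with λ ≠ 0, μ ∈ ℝ, and let B : ℝ^d → M₂(ℝ) satisfy det B(x) = 1 and B(x+α)⁻¹ · S_E(x) · B(x) = [[λ, μ], [0, λ⁻¹]] for every x ∈ ℝ^d. Then u(n) := λⁿ · (B(θ + nα))₁₁ defines a solution of the eigenvalue equation u(n+1) + u(n−1) + v(θ+nα)·u(n) = E·u(n) for all n ∈ ℤ. -/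
/-! The first column `b(x)` of `B(x)` satisfies `S_E(x) b(x) = λ b(x + α)`, because the
conjugated cocycle is upper triangular. Its second row says `b₁(x) = λ b₂(x + α)`, so
`b₂` is a shifted copy of `b₁`; substituting this into the first row leaves a three-term
recurrence for `b₁` along the orbit `θ + nα`, which the factor `λⁿ` turns into the
eigenvalue equation. -/

noncomputable section

theorem Matrix.mul_eq_mul_of_nonsing_inv_mul_eq {n : Type*} [Fintype n] [DecidableEq n]
    {R : Type*} [CommRing R] {A M N C : Matrix n n R} (hA : IsUnit A.det)
    (h : A⁻¹ * M * N = C) : M * N = A * C := by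
  rw [← h, Matrix.mul_assoc]
  exact (A.mul_nonsing_inv_cancel_left _ hA).symm

theorem transfer_mul_eq_mul_upperTriangular_col_zero {R : Type*} [CommRing R]
    {a l m l' : R} {P Q : Matrix (Fin 2) (Fin 2) R}
    (h : !![a, -1; 1, 0] * P = Q * !![l, m; 0, l']) :
    a * P 0 0 - P 1 0 = l * Q 0 0 ∧ P 0 0 = l * Q 1 0 := by
  have h00 := congrFun (congrFun h 0) 0
  have h10 := congrFun (congrFun h 1) 0
  simp only [Matrix.mul_apply, Fin.sum_univ_two, Matrix.of_apply, Matrix.cons_val',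
    Matrix.cons_val_zero, Matrix.cons_val_one, Matrix.empty_val', Matrix.cons_val_fin_one]
    at h00 h10
  exact ⟨by linear_combination h00, by linear_combination h10⟩

theorem zpow_mul_add_zpow_mul_eq_of_transfer {K : Type*} [Field K] {l : K} (hl : l ≠ 0)
    {a p q : ℤ → K} (hp : ∀ n, a n * p n - q n = l * p (n + 1))
    (hq : ∀ n, p n = l * q (n + 1)) (n : ℤ) :
    l ^ (n + 1) * p (n + 1) + l ^ (n - 1) * p (n - 1) = a n * (l ^ n * p n) := by
  have hprev : p (n - 1) = l * q n := by simpa using hq (n - 1)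
  rw [zpow_add_one₀ hl, zpow_sub_one₀ hl, hprev]
  linear_combination (-(l ^ n)) * hp n + l ^ n * q n * inv_mul_cancel₀ hl

theorem stmt17_general (d : ℕ) (α θ : Fin d → ℝ) (v : (Fin d → ℝ) → ℝ) (E : ℝ)
    (lam μ : ℝ) (hlam : lam ≠ 0)
    (B : (Fin d → ℝ) → Matrix (Fin 2) (Fin 2) ℝ)
    (hdetB : ∀ x, (B x).det = 1)
    (hconj : ∀ x : Fin d → ℝ,
      (B (x + α))⁻¹ * !![E - v x, -1; 1, 0] * B x = !![lam, μ; 0, lam⁻¹]) :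
    ∃ u : ℤ → ℝ,
      (∀ n : ℤ, u n = lam ^ n * B (θ + (n : ℝ) • α) 0 0) ∧
      ∀ n : ℤ, u (n + 1) + u (n - 1) + v (θ + (n : ℝ) • α) * u n = E * u n := by
  let x : ℤ → Fin d → ℝ := fun n => θ + (n : ℝ) • α
  have hcol (n : ℤ) := transfer_mul_eq_mul_upperTriangular_col_zero
    (Matrix.mul_eq_mul_of_nonsing_inv_mul_eq (by simp [hdetB]) (hconj (x n)))
  have hshift (n : ℤ) : x n + α = x (n + 1) := by simp only [x]; push_cast; module
  have hrec := zpow_mul_add_zpow_mul_eq_of_transfer hlam (a := fun n => E - v (x n))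
    (p := fun n => B (x n) 0 0) (q := fun n => B (x n) 1 0)
    (fun n => by simpa [hshift] using (hcol n).1) (fun n => by simpa [hshift] using (hcol n).2)
  refine ⟨fun n => lam ^ n * B (x n) 0 0, fun n => rfl, fun n => ?_⟩
  linear_combination hrec n

theorem stmt17 (d : ℕ) (hd : 1 ≤ d) (α θ : Fin d → ℝ) (v : (Fin d → ℝ) → ℝ) (E : ℝ)
    (lam μ : ℝ) (hlam : lam ≠ 0)
    (B : (Fin d → ℝ) → Matrix (Fin 2) (Fin 2) ℝ)
    (hdetB : ∀ x, (B x).det = 1)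
    (hconj : ∀ x : Fin d → ℝ,
      (B (x + α))⁻¹ * !![E - v x, -1; 1, 0] * B x = !![lam, μ; 0, lam⁻¹]) :
    ∃ u : ℤ → ℝ,
      (∀ n : ℤ, u n = lam ^ n * B (θ + (n : ℝ) • α) 0 0) ∧
      ∀ n : ℤ, u (n + 1) + u (n - 1) + v (θ + (n : ℝ) • α) * u n = E * u n :=
  stmt17_general d α θ v E lam μ hlam B hdetB hconj
end
end

section
/- There exist V : ℤ → ℝ and u : ℤ → ℝ such that V(n) = −2/(n²−1) for every integer n with |n| ≥ 2 (so V decays at the rate n^{−2}), u is not identically zero, Σ_{n∈ℤ} u(n)² < ∞, and u(n+1) + u(n−1) + V(n)·u(n) = 2·u(n) for every n ∈ ℤ. In particular, a potential decaying like n^{−2} (hence in ℓ¹) can make the energy 2, the edge of the essential spectrum [−2,2] of the free discrete Laplacian, an eigenvalue of the perturbed whole-line discrete Schrödinger operator. -/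
/-!
Any nowhere-vanishing `u : ℤ → ℝ` solves `u (n + 1) + u (n - 1) + V n * u n = E * u n` for the
potential `V` read off from the equation itself. Taking `u n = 1 / max 1 |n|`, which is square
summable, and `E = 2`, the resulting potential is `-2 / (n ^ 2 - 1)` for `|n| ≥ 2`, since
`2 / n - 1 / (n + 1) - 1 / (n - 1) = -2 / (n (n ^ 2 - 1))`.
-/

noncomputable section

def potentialOf (E : ℝ) (u : ℤ → ℝ) (n : ℤ) : ℝ :=
  (E * u n - u (n + 1) - u (n - 1)) / u n

theorem add_potentialOf_mul {E : ℝ} {u : ℤ → ℝ} (hu : ∀ n, u n ≠ 0) (n : ℤ) :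
    u (n + 1) + u (n - 1) + potentialOf E u n * u n = E * u n := by
  rw [potentialOf, div_mul_cancel₀ _ (hu n)]
  ring

theorem potentialOf_neg {E : ℝ} {u : ℤ → ℝ} (hu : ∀ n, u (-n) = u n) (n : ℤ) :
    potentialOf E u (-n) = potentialOf E u n := by
  simp only [potentialOf, show -n + 1 = -(n - 1) by ring, show -n - 1 = -(n + 1) by ring, hu]
  ring

def invMaxOneAbs (n : ℤ) : ℝ := (max 1 |(n : ℝ)|)⁻¹

theorem invMaxOneAbs_pos (n : ℤ) : 0 < invMaxOneAbs n := by
  unfold invMaxOneAbs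
  positivity

theorem invMaxOneAbs_neg (n : ℤ) : invMaxOneAbs (-n) = invMaxOneAbs n := by
  simp [invMaxOneAbs]

theorem invMaxOneAbs_of_ne_zero {n : ℤ} (hn : n ≠ 0) : invMaxOneAbs n = |(n : ℝ)|⁻¹ := by
  have h : (1 : ℝ) ≤ |(n : ℝ)| := by exact_mod_cast Int.one_le_abs hn
  rw [invMaxOneAbs, max_eq_right h]

theorem invMaxOneAbs_of_pos {n : ℤ} (hn : 0 < n) : invMaxOneAbs n = (n : ℝ)⁻¹ := by
  rw [invMaxOneAbs_of_ne_zero hn.ne', abs_of_pos (by exact_mod_cast hn)]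

theorem summable_invMaxOneAbs_sq : Summable fun n : ℤ => invMaxOneAbs n ^ 2 := by
  refine (Real.summable_one_div_int_pow.mpr one_lt_two).congr_cofinite ?_
  filter_upwards [Filter.eventually_cofinite_ne 0] with n hn
  rw [invMaxOneAbs_of_ne_zero hn, inv_pow, sq_abs, one_div]

theorem potentialOf_two_invMaxOneAbs_of_two_le {n : ℤ} (hn : 2 ≤ n) :
    potentialOf 2 invMaxOneAbs n = -2 / ((n : ℝ) ^ 2 - 1) := by
  have hn' : (2 : ℝ) ≤ n := by exact_mod_cast hn
  rw [potentialOf, invMaxOneAbs_of_pos (by omega), invMaxOneAbs_of_pos (by omega),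
    invMaxOneAbs_of_pos (by omega)]
  have : (n : ℝ) - 1 ≠ 0 := by linarith
  have : (n : ℝ) ^ 2 - 1 ≠ 0 := by nlinarith
  push_cast
  field_simp
  ring

theorem potentialOf_two_invMaxOneAbs {n : ℤ} (hn : 2 ≤ |n|) :
    potentialOf 2 invMaxOneAbs n = -2 / ((n : ℝ) ^ 2 - 1) := by
  rcases le_abs'.mp hn with hneg | hpos
  · rw [← potentialOf_neg invMaxOneAbs_neg,
      potentialOf_two_invMaxOneAbs_of_two_le (by omega : 2 ≤ -n)]
    push_cast
    ring
  · exact potentialOf_two_invMaxOneAbs_of_two_le hpos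

theorem stmt19 :
    ∃ V u : ℤ → ℝ,
      (∀ n : ℤ, 2 ≤ |n| → V n = -2 / ((n : ℝ) ^ 2 - 1)) ∧
      u ≠ 0 ∧
      Summable (fun n : ℤ => u n ^ 2) ∧
      ∀ n : ℤ, u (n + 1) + u (n - 1) + V n * u n = 2 * u n :=
  ⟨potentialOf 2 invMaxOneAbs, invMaxOneAbs, fun _ => potentialOf_two_invMaxOneAbs,
    fun h => (invMaxOneAbs_pos 0).ne' (congrFun h 0), summable_invMaxOneAbs_sq,
    add_potentialOf_mul fun n => (invMaxOneAbs_pos n).ne'⟩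

end
end
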